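/- arXiv:2410.18992 — 8 statements merged into one kernel-verified Lean document; each statement's English description precedes it below -/
import Mathlib

section
/- Let k be an algebraically closed field, n ≥ 1 a natural number, and A : Fin n → Matrix (Fin d₂) (Fin d₁) k a family of matrices. Assume: (a) ⨆_i LinearMap.range (Matrix.mulVecLin (A i)) = ⊤ in (Fin d₂ → k); (b) A is indecomposable as a representation of the n-Kronecker quiver, i.e. there do not exist submodules U₁, U₂ of (Fin d₁ → k) and V₁, V₂ of (Fin d₂ → k) with U₁ ⊓ U₂ = ⊥, U₁ ⊔ U₂ = ⊤, V₁ ⊓ V₂ = ⊥, V₁ ⊔ V₂ = ⊤, such that for every i the map Matrix.mulVecLin (A i) maps U₁ into V₁ and U₂ into V₂, and such that (U₁,V₁) ≠ (⊥,⊥) and (U₂,V₂) ≠ (⊥,⊥); (c) (d₁,d₂) ≠ (1,n). Then n·d₂ ≤ (n²−1)·d₁. -/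
set_option maxHeartbeats 1000000
set_option synthInstance.maxHeartbeats 1000000

open Module Submodule

lemma finrank_iSup_le_sum {k V : Type*} [Field k] [AddCommGroup V] [Module k V]
    [FiniteDimensional k V] {n : ℕ} (p : Fin n → Submodule k V) :
    finrank k ↥(⨆ i, p i) ≤ ∑ i, finrank k ↥(p i) := by
  classical
  set S : ((i : Fin n) → ↥(p i)) →ₗ[k] V :=
    LinearMap.lsum k (fun i => ↥(p i)) ℕ (fun i => (p i).subtype) with hS
  have hrange : LinearMap.range S = ⨆ i, p i := by
    apply le_antisymm
    · rintro y ⟨f, rfl⟩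
      simp only [hS, LinearMap.lsum_apply, LinearMap.sum_apply, LinearMap.comp_apply,
        LinearMap.proj_apply, Submodule.coe_subtype]
      exact Submodule.sum_mem _ fun i _ => (le_iSup p i) (f i).2
    · rw [iSup_le_iff]
      intro i x hx
      refine ⟨Pi.single i ⟨x, hx⟩, ?_⟩
      simp only [hS, LinearMap.lsum_apply, LinearMap.sum_apply, LinearMap.comp_apply,
        LinearMap.proj_apply, Submodule.coe_subtype]
      rw [Finset.sum_eq_single i]
      · simp
      · intro j _ hj
        rw [Pi.single_eq_of_ne hj]
        simp
      · simp
  calc finrank k ↥(⨆ i, p i) = finrank k ↥(LinearMap.range S) := by rw [hrange]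
    _ ≤ finrank k ((i : Fin n) → ↥(p i)) := S.finrank_range_le
    _ = ∑ i, finrank k ↥(p i) := Module.finrank_pi_fintype k

/-- Lemma 4.3 of the paper: an indecomposable `n`-Kronecker tuple
`A : Fin n → Matrix (Fin d₂) (Fin d₁) k` whose images together span `k^{d₂}` and
whose dimension vector is not the exceptional `(1, n)` satisfies
`n·d₂ ≤ (n²−1)·d₁`. -/
theorem stmt2 (k : Type*) [Field k] [IsAlgClosed k] (n : ℕ) (hn : 1 ≤ n)
    (d₁ d₂ : ℕ) (A : Fin n → Matrix (Fin d₂) (Fin d₁) k)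
    (hspan : (⨆ i, LinearMap.range (Matrix.mulVecLin (A i))) = ⊤)
    (hind : ¬ ∃ (U₁ U₂ : Submodule k (Fin d₁ → k))
        (V₁ V₂ : Submodule k (Fin d₂ → k)),
        U₁ ⊓ U₂ = ⊥ ∧ U₁ ⊔ U₂ = ⊤ ∧ V₁ ⊓ V₂ = ⊥ ∧ V₁ ⊔ V₂ = ⊤ ∧
        (∀ i, ∀ x ∈ U₁, Matrix.mulVecLin (A i) x ∈ V₁) ∧
        (∀ i, ∀ x ∈ U₂, Matrix.mulVecLin (A i) x ∈ V₂) ∧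
        (U₁, V₁) ≠ (⊥, ⊥) ∧ (U₂, V₂) ≠ (⊥, ⊥))
    (hexc : (d₁, d₂) ≠ (1, n)) :
    n * d₂ ≤ (n ^ 2 - 1) * d₁ := by
  classical
  by_contra hcon
  push_neg at hcon
  have hd2top : finrank k ↥(⊤ : Submodule k (Fin d₂ → k)) = d₂ := by
    rw [finrank_top, Module.finrank_pi]
    simp
  have hd1pi : finrank k (Fin d₁ → k) = d₁ := by rw [Module.finrank_pi]; simp
  -- Step A : d₂ ≤ n * d₁
  have hstepA : d₂ ≤ n * d₁ := by
    have h1 : finrank k ↥(⨆ i, LinearMap.range (Matrix.mulVecLin (A i)))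
        ≤ ∑ _i : Fin n, d₁ := by
      refine (finrank_iSup_le_sum _).trans (Finset.sum_le_sum fun i _ => ?_)
      exact (Matrix.mulVecLin (A i)).finrank_range_le.trans_eq hd1pi
    rw [hspan, hd2top] at h1
    simpa using h1
  -- arithmetic : n * (n*d₁ - d₂) < d₁
  have hnr : n * (n * d₁ - d₂) < d₁ := by
    have e0 : (n * d₁ - d₂) + d₂ = n * d₁ := by omega
    have e1 : n * ((n * d₁ - d₂) + d₂) = n * (n * d₁) := by rw [e0]
    rw [Nat.mul_add] at e1
    have e2 : (n ^ 2 - 1) * d₁ = n * (n * d₁) - d₁ := by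
      rw [Nat.sub_mul, one_mul, pow_two, mul_assoc]
    rw [e2] at hcon
    omega
  -- degenerate dimensions
  have hd1pos : 1 ≤ d₁ := by
    rcases Nat.eq_zero_or_pos d₁ with h | h
    · subst h; omega
    · exact h
  have hd1two : 2 ≤ d₁ := by
    rcases Nat.lt_or_ge d₁ 2 with h | h
    · have hd1 : d₁ = 1 := by omega
      exfalso
      apply hexc
      have : n * d₁ - d₂ = 0 := by
        by_contra hr
        have : 1 ≤ n * (n * d₁ - d₂) := Nat.one_le_iff_ne_zero.mpr (by positivity)
        omega
      have hnd : n * d₁ = n := by rw [hd1, mul_one]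
      have : d₂ = n := by omega
      rw [hd1, this]
    · exact h
  -- the total map T
  set T : (Fin n → (Fin d₁ → k)) →ₗ[k] (Fin d₂ → k) :=
    LinearMap.lsum k (fun _ => (Fin d₁ → k)) ℕ (fun i => Matrix.mulVecLin (A i)) with hT
  have hTapp : ∀ f, T f = ∑ i, Matrix.mulVecLin (A i) (f i) := by
    intro f
    simp [hT, LinearMap.lsum_apply]
  have hTrange : LinearMap.range T = ⊤ := by
    rw [eq_top_iff, ← hspan, iSup_le_iff]
    rintro i _ ⟨v, rfl⟩
    refine ⟨Pi.single i v, ?_⟩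
    rw [hTapp, Finset.sum_eq_single i]
    · simp
    · intro j _ hj
      rw [Pi.single_eq_of_ne hj]
      simp
    · simp
  have hdomT : finrank k (Fin n → (Fin d₁ → k)) = n * d₁ := by
    rw [Module.finrank_pi_fintype k]
    simp [hd1pi, Finset.sum_const, mul_comm]
  have hkerT : finrank k ↥(LinearMap.ker T) = n * d₁ - d₂ := by
    have h := T.finrank_range_add_finrank_ker
    rw [hTrange, hd2top, hdomT] at h
    omega
  -- the subspace U₀
  set U₀ : Submodule k (Fin d₁ → k) :=
    ⨆ i, Submodule.map (LinearMap.proj i) (LinearMap.ker T) with hU₀def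
  have hU₀le : U₀ ≤ U₀ := le_rfl
  have hU₀dim : finrank k ↥U₀ < d₁ := by
    have h1 : finrank k ↥U₀ ≤ ∑ _i : Fin n, finrank k ↥(LinearMap.ker T) := by
      refine (finrank_iSup_le_sum _).trans (Finset.sum_le_sum fun i _ => ?_)
      exact Submodule.finrank_map_le _ _
    rw [hkerT] at h1
    simp only [Finset.sum_const, Finset.card_univ, Fintype.card_fin, smul_eq_mul] at h1
    omega
  -- choose x ∉ U₀
  have hxex : ∃ x, x ∉ U₀ := by
    by_contra h
    push_neg at h
    have : U₀ = ⊤ := eq_top_iff'.mpr h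
    rw [this, finrank_top, hd1pi] at hU₀dim
    omega
  obtain ⟨x, hx⟩ := hxex
  have hx0 : x ≠ 0 := fun h => hx (h ▸ U₀.zero_mem)
  set U₁ : Submodule k (Fin d₁ → k) := Submodule.span k {x} with hU₁def
  have hU₁dim : finrank k ↥U₁ = 1 := finrank_span_singleton hx0
  have hdisj01 : Disjoint U₀ U₁ := (Submodule.disjoint_span_singleton' hx0).mpr hx
  obtain ⟨C, hC⟩ := Submodule.exists_isCompl (U₀ ⊔ U₁)
  set U₂ : Submodule k (Fin d₁ → k) := U₀ ⊔ C with hU₂def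
  have hU₀U₂ : U₀ ≤ U₂ := le_sup_left
  have hsupU : U₁ ⊔ U₂ = ⊤ := by
    rw [hU₂def, ← sup_assoc, sup_comm U₁ U₀]
    exact codisjoint_iff.mp hC.2
  -- dimension of U₂
  have e3 : finrank k ↥(U₀ ⊔ U₁) + finrank k ↥(U₀ ⊓ U₁) =
      finrank k ↥U₀ + finrank k ↥U₁ := Submodule.finrank_sup_add_finrank_inf_eq U₀ U₁
  rw [disjoint_iff.mp hdisj01] at e3
  have e4 : finrank k ↥(U₀ ⊔ U₁) + finrank k ↥C = d₁ := by
    rw [Submodule.finrank_add_eq_of_isCompl hC, hd1pi]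
  have hdisj0C : Disjoint U₀ C := hC.1.mono_left le_sup_left
  have e5 : finrank k ↥U₂ + finrank k ↥(U₀ ⊓ C) =
      finrank k ↥U₀ + finrank k ↥C := Submodule.finrank_sup_add_finrank_inf_eq U₀ C
  rw [disjoint_iff.mp hdisj0C] at e5
  have hbot : finrank k ↥(⊥ : Submodule k (Fin d₁ → k)) = 0 := by simp
  have hU₂dim : finrank k ↥U₂ = d₁ - 1 := by
    rw [hbot] at e3 e5
    omega
  have hinfU : U₁ ⊓ U₂ = ⊥ := by
    have e6 : finrank k ↥(U₁ ⊔ U₂) + finrank k ↥(U₁ ⊓ U₂) =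
        finrank k ↥U₁ + finrank k ↥U₂ := Submodule.finrank_sup_add_finrank_inf_eq U₁ U₂
    rw [hsupU, finrank_top, hd1pi, hU₁dim, hU₂dim] at e6
    have : finrank k ↥(U₁ ⊓ U₂) = 0 := by omega
    exact Submodule.finrank_eq_zero.mp this
  -- V₁
  set V₁ : Submodule k (Fin d₂ → k) :=
    ⨆ i, Submodule.map (Matrix.mulVecLin (A i)) U₁ with hV₁def
  have hV₁mem : ∀ i, ∀ y ∈ U₁, Matrix.mulVecLin (A i) y ∈ V₁ := by
    intro i y hy
    exact Submodule.mem_iSup_of_mem i (Submodule.mem_map_of_mem hy)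
  have hV₁dim : finrank k ↥V₁ ≤ n := by
    have h1 : finrank k ↥V₁ ≤ ∑ _i : Fin n, 1 := by
      refine (finrank_iSup_le_sum _).trans (Finset.sum_le_sum fun i _ => ?_)
      exact (Submodule.finrank_map_le _ _).trans_eq hU₁dim
    simpa using h1
  -- T₂ and V₂
  set T₂ : (Fin n → ↥U₂) →ₗ[k] (Fin d₂ → k) :=
    LinearMap.lsum k (fun _ => ↥U₂) ℕ (fun i => (Matrix.mulVecLin (A i)) ∘ₗ U₂.subtype) with hT₂
  have hT₂app : ∀ f, T₂ f = ∑ i, Matrix.mulVecLin (A i) ((f i : Fin d₁ → k)) := by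
    intro f
    simp [hT₂, LinearMap.lsum_apply]
  set V₂ : Submodule k (Fin d₂ → k) := LinearMap.range T₂ with hV₂def
  have hV₂mem : ∀ i, ∀ y ∈ U₂, Matrix.mulVecLin (A i) y ∈ V₂ := by
    intro i y hy
    refine ⟨Pi.single i ⟨y, hy⟩, ?_⟩
    rw [hT₂app, Finset.sum_eq_single i]
    · simp
    · intro j _ hj
      rw [Pi.single_eq_of_ne hj]
      simp
    · simp
  -- kernel of T₂ is at least as big as kernel of T
  have hker_mem : ∀ (f : ↥(LinearMap.ker T)) (i : Fin n), (f : Fin n → Fin d₁ → k) i ∈ U₂ := by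
    intro f i
    exact hU₀U₂ (Submodule.mem_iSup_of_mem i ⟨(f : Fin n → Fin d₁ → k), f.2, rfl⟩)
  set g : ↥(LinearMap.ker T) →ₗ[k] (Fin n → ↥U₂) :=
    LinearMap.pi (fun i => LinearMap.codRestrict U₂
      (((LinearMap.proj i : (Fin n → Fin d₁ → k) →ₗ[k] (Fin d₁ → k))) ∘ₗ (LinearMap.ker T).subtype)
      (fun f => hker_mem f i)) with hg
  have hgapp : ∀ (f : ↥(LinearMap.ker T)) (i : Fin n),
      ((g f i : Fin d₁ → k)) = (f : Fin n → Fin d₁ → k) i := fun f i => rfl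
  have hgker : ∀ f, T₂ (g f) = 0 := by
    intro f
    rw [hT₂app]
    have : ∑ i, Matrix.mulVecLin (A i) ((g f i : Fin d₁ → k))
        = T (f : Fin n → Fin d₁ → k) := by
      rw [hTapp]
      exact Finset.sum_congr rfl fun i _ => by rw [hgapp]
    rw [this, f.2]
  set φ : ↥(LinearMap.ker T) →ₗ[k] ↥(LinearMap.ker T₂) :=
    LinearMap.codRestrict (LinearMap.ker T₂) g (fun f => LinearMap.mem_ker.mpr (hgker f)) with hφ
  have hφinj : Function.Injective φ := by
    intro a b hab
    have h1 : g a = g b := congrArg Subtype.val hab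
    apply Subtype.ext
    funext i
    have := congrFun h1 i
    have := congrArg Subtype.val this
    rw [hgapp, hgapp] at this
    exact this
  have hkerT₂ : n * d₁ - d₂ ≤ finrank k ↥(LinearMap.ker T₂) := by
    rw [← hkerT]
    exact LinearMap.finrank_le_finrank_of_injective hφinj
  have hdomT₂ : finrank k (Fin n → ↥U₂) = n * (d₁ - 1) := by
    rw [Module.finrank_pi_fintype k]
    simp [hU₂dim, Finset.sum_const, mul_comm]
  have e7 : finrank k ↥V₂ + finrank k ↥(LinearMap.ker T₂) = n * (d₁ - 1) := by
    have h := T₂.finrank_range_add_finrank_ker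
    rw [hdomT₂] at h
    exact h
  -- V₁ ⊔ V₂ = ⊤
  have hsupV : V₁ ⊔ V₂ = ⊤ := by
    rw [eq_top_iff]
    intro v _
    have hv : v ∈ LinearMap.range T := hTrange ▸ Submodule.mem_top
    obtain ⟨f, rfl⟩ := hv
    have hcomp : ∀ i, ∃ u ∈ U₁, ∃ w ∈ U₂, u + w = f i := by
      intro i
      have : f i ∈ U₁ ⊔ U₂ := hsupU ▸ Submodule.mem_top
      exact Submodule.mem_sup.mp this
    choose u hu w hw huw using hcomp
    have hsplit : T f = (∑ i, Matrix.mulVecLin (A i) (u i))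
        + (∑ i, Matrix.mulVecLin (A i) (w i)) := by
      rw [hTapp, ← Finset.sum_add_distrib]
      refine Finset.sum_congr rfl fun i _ => ?_
      rw [← map_add, huw]
    rw [hsplit]
    refine Submodule.add_mem_sup ?_ ?_
    · exact Submodule.sum_mem _ fun i _ => hV₁mem i (u i) (hu i)
    · refine ⟨fun i => ⟨w i, hw i⟩, ?_⟩
      rw [hT₂app]
    -- done
  -- V₁ ⊓ V₂ = ⊥
  have hinfV : V₁ ⊓ V₂ = ⊥ := by
    have e8 : finrank k ↥(V₁ ⊔ V₂) + finrank k ↥(V₁ ⊓ V₂) =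
        finrank k ↥V₁ + finrank k ↥V₂ := Submodule.finrank_sup_add_finrank_inf_eq V₁ V₂
    rw [hsupV, hd2top] at e8
    have hmul : n * (d₁ - 1) + n = n * d₁ := by
      have : (d₁ - 1) + 1 = d₁ := by omega
      calc n * (d₁ - 1) + n = n * ((d₁ - 1) + 1) := by ring
        _ = n * d₁ := by rw [this]
    have : finrank k ↥(V₁ ⊓ V₂) = 0 := by omega
    exact Submodule.finrank_eq_zero.mp this
  -- nontriviality
  have hne1 : (U₁, V₁) ≠ (⊥, ⊥) := by
    intro h
    have : U₁ = ⊥ := (Prod.mk.injEq _ _ _ _ ▸ h : U₁ = ⊥ ∧ V₁ = ⊥).1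
    exact hx0 (Submodule.span_singleton_eq_bot.mp this)
  have hne2 : (U₂, V₂) ≠ (⊥, ⊥) := by
    intro h
    have h2 : U₂ = ⊥ := (Prod.mk.injEq _ _ _ _ ▸ h : U₂ = ⊥ ∧ V₂ = ⊥).1
    rw [h2, hbot] at hU₂dim
    omega
  exact hind ⟨U₁, U₂, V₁, V₂, hinfU, hsupU, hinfV, hsupV, hV₁mem, hV₂mem, hne1, hne2⟩
end

section
/- Let n ≥ 1 and let d₁, d₂ be natural numbers with d₁ ≥ 1. If d₁² + d₂² ≤ n·d₁·d₂ + 1 and (d₁,d₂) ≠ (1,n), then n·d₂ ≤ (n²−1)·d₁. -/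
/-- The computational core of Lemma 4.3 of the paper: if `(d₁, d₂)` with
`d₁ ≥ 1` is a root of the Tits form of the `n`-Kronecker quiver
(`d₁² + d₂² − n·d₁·d₂ ≤ 1`) and `(d₁, d₂) ≠ (1, n)`, then
`n·d₂ ≤ (n²−1)·d₁`. -/
theorem stmt3 (n : ℕ) (hn : 1 ≤ n) (d₁ d₂ : ℕ) (hd₁ : 1 ≤ d₁)
    (hq : d₁ ^ 2 + d₂ ^ 2 ≤ n * d₁ * d₂ + 1) (hexc : (d₁, d₂) ≠ (1, n)) :
    n * d₂ ≤ (n ^ 2 - 1) * d₁ := by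
  by_contra h
  push_neg at h
  -- move to ℤ
  have hcast : ((n ^ 2 - 1 : ℕ) : ℤ) = (n : ℤ) ^ 2 - 1 := by
    have : 1 ≤ n ^ 2 := Nat.one_le_pow _ _ hn
    push_cast [Nat.cast_sub this]; ring
  have h' : ((n : ℤ) ^ 2 - 1) * d₁ + 1 ≤ (n : ℤ) * d₂ := by
    have := (Nat.add_one_le_iff.mpr h)
    have : (((n ^ 2 - 1) * d₁ + 1 : ℕ) : ℤ) ≤ ((n * d₂ : ℕ) : ℤ) := by exact_mod_cast this
    push_cast [hcast] at this ⊢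
    linarith
  have hq' : (d₁ : ℤ) ^ 2 + (d₂ : ℤ) ^ 2 ≤ (n : ℤ) * d₁ * d₂ + 1 := by exact_mod_cast hq
  have hd₁' : (1 : ℤ) ≤ d₁ := by exact_mod_cast hd₁
  have hn' : (1 : ℤ) ≤ n := by exact_mod_cast hn
  have hd₂0 : (0 : ℤ) ≤ d₂ := by positivity
  rcases lt_trichotomy (d₂ : ℤ) ((n : ℤ) * d₁) with hlt | heq | hgt
  · -- d₂ < n d₁ : t := n d₁ - d₂ ≥ 1, and n t ≤ d₁ - 1
    have ht1 : (1 : ℤ) ≤ (n : ℤ) * d₁ - d₂ := by linarith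
    have hnt : (n : ℤ) * ((n : ℤ) * d₁ - d₂) ≤ (d₁ : ℤ) - 1 := by nlinarith
    have hd₂le : (d₂ : ℤ) ≤ (n : ℤ) * d₁ - 1 := by linarith
    nlinarith [mul_le_mul hd₂le hnt (by nlinarith) (by linarith), mul_pos (lt_of_lt_of_le one_pos hn') (lt_of_lt_of_le one_pos ht1)]
  · -- d₂ = n d₁ : forces d₁ = 1, d₂ = n, contradiction with hexc
    have hd1 : (d₁ : ℤ) = 1 := by nlinarith
    have hd1n : d₁ = 1 := by exact_mod_cast hd1
    have hd2n : d₂ = n := by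
      have : (d₂ : ℤ) = n := by rw [heq, hd1]; ring
      exact_mod_cast this
    exact hexc (by simp [hd1n, hd2n])
  · -- d₂ > n d₁ : q too big
    nlinarith
end

section
/- Let n ≥ 1 be a natural number, and let d₁, d₂ be natural numbers with n·d₂ ≤ (n²−1)·d₁. Then there exist natural numbers c₀, c₁, …, c_{n−1} and e₂, e₃, …, eₙ such that d₁ = ∑_{j=0}^{n−1} c_j + ∑_{m=2}^{n} m·e_m and d₂ = ∑_{j=0}^{n−1} j·c_j + ∑_{m=2}^{n} (m·n − 1)·e_m. In other words, every pair (d₁,d₂) of natural numbers with n·d₂ ≤ (n²−1)·d₁ is an ℕ-linear combination of the pairs (1,0), (1,1), …, (1,n−1), (2,2n−1), (3,3n−1), …, (n,n²−1). -/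
open Finset

private lemma sum_upd {k : ℕ} (f : Fin k → ℕ) (j : Fin k) (g : Fin k → ℕ) :
    (∑ i : Fin k, g i * (f i + if i = j then 1 else 0)) =
      (∑ i : Fin k, g i * f i) + g j := by
  simp [mul_add, Finset.sum_add_distrib, mul_ite, Finset.sum_ite_eq']

private lemma single_case (n : ℕ) (hn : 1 ≤ n) :
    ∀ d₁ d₂ : ℕ, d₂ ≤ (n - 1) * d₁ →
      ∃ c : Fin n → ℕ, d₁ = (∑ j : Fin n, c j) ∧ d₂ = ∑ j : Fin n, (j : ℕ) * c j := by
  intro d₁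
  induction d₁ with
  | zero =>
      intro d₂ hd
      have : d₂ = 0 := by omega
      exact ⟨fun _ => 0, by simp, by simp [this]⟩
  | succ k ihk =>
      intro d₂ hd
      have hjlt : min d₂ (n - 1) < n := by omega
      have hb : d₂ - min d₂ (n - 1) ≤ (n - 1) * k := by
        rcases le_total d₂ (n - 1) with h' | h'
        · simp [min_eq_left h']
        · rw [min_eq_right h', Nat.sub_le_iff_le_add, ← Nat.mul_succ]
          exact hd
      obtain ⟨c, h1, h2⟩ := ihk (d₂ - min d₂ (n - 1)) hb
      refine ⟨fun i => c i + if i = ⟨min d₂ (n - 1), hjlt⟩ then 1 else 0, ?_, ?_⟩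
      · have hs := sum_upd c ⟨min d₂ (n - 1), hjlt⟩ (fun _ => 1)
        simp only [one_mul] at hs
        rw [hs]
        omega
      · have hs := sum_upd c ⟨min d₂ (n - 1), hjlt⟩ (fun i => (i : ℕ))
        simp only [Fin.val_mk] at hs
        rw [hs]
        omega

private lemma nh1 (A B k : ℕ) (h : B + 2 < A + k) : 2 ≤ A + k - B := by omega
private lemma nh2 (A B k : ℕ) (h : A ≤ B) : A + k - B ≤ k := by omega
private lemma nh3 (A B k D : ℕ) (h : A + k ≤ B + D) : A + k - B ≤ D := by omega
private lemma nh4 (A B k : ℕ) (h : B + 2 < A + k) : A + k ≤ B + (A + k - B) := by omega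

private lemma big_m (n d₁ d₂ : ℕ) (hn2 : 2 ≤ n) (hpow : 1 ≤ n ^ 2)
    (P2 : d₂ + 1 ≤ n * d₁)
    (hc : (n ^ 2 - 1) * d₁ + 2 < n * d₂ + n) :
    (n * d₂ + n - (n ^ 2 - 1) * d₁) * n ≤ d₂ + 1 := by
  have hble : (n ^ 2 - 1) * d₁ ≤ n * d₂ + n := le_trans (Nat.le_add_right _ 2) hc.le
  have hn2z : (2 : ℤ) ≤ (n : ℤ) := by exact_mod_cast hn2
  have P2z : (d₂ : ℤ) + 1 ≤ (n : ℤ) * d₁ := by exact_mod_cast P2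
  zify [hpow, hble]
  nlinarith [mul_nonneg (by nlinarith : (0:ℤ) ≤ (n:ℤ) ^ 2 - 1)
    (by linarith : (0:ℤ) ≤ (n:ℤ) * d₁ - (d₂ : ℤ) - 1)]

private lemma rec_ineq (n d₁ d₂ m : ℕ) (hn2 : 2 ≤ n) (hpow : 1 ≤ n ^ 2)
    (h2m : 2 ≤ m) (hmd : m ≤ d₁) (hmd2 : m * n ≤ d₂ + 1)
    (hG4 : n * d₂ + n ≤ (n ^ 2 - 1) * d₁ + m) :
    n * (d₂ - (m * n - 1)) ≤ (n ^ 2 - 1) * (d₁ - m) := by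
  have h1n : 1 ≤ m * n := by nlinarith
  have hmn1 : m * n - 1 ≤ d₂ := by omega
  have hG4' : (n : ℤ) * d₂ + n ≤ ((n : ℤ) ^ 2 - 1) * d₁ + m := by
    zify [hpow] at hG4; exact hG4
  zify [hpow, h1n, hmn1, hmd]
  nlinarith [hG4']

set_option maxHeartbeats 800000 in
/-- Lemma 4.5 of the paper: every pair `(d₁, d₂)` of naturals with
`n·d₂ ≤ (n²−1)·d₁` is an `ℕ`-linear combination of the pairs
`(1,0), (1,1), …, (1,n−1)` (with coefficients `c j`, `j : Fin n`) and
`(2,2n−1), (3,3n−1), …, (n,n²−1)` (with coefficients `e m`, where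
`m : Fin (n−1)` encodes the pair `(m+2, (m+2)·n − 1)`). -/
theorem stmt4 (n : ℕ) (hn : 1 ≤ n) (d₁ d₂ : ℕ)
    (h : n * d₂ ≤ (n ^ 2 - 1) * d₁) :
    ∃ (c : Fin n → ℕ) (e : Fin (n - 1) → ℕ),
      d₁ = (∑ j : Fin n, c j) + ∑ m : Fin (n - 1), ((m : ℕ) + 2) * e m ∧
      d₂ = (∑ j : Fin n, (j : ℕ) * c j) +
        ∑ m : Fin (n - 1), (((m : ℕ) + 2) * n - 1) * e m := by
  revert h
  induction d₁ using Nat.strong_induction_on generalizing d₂ with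
  | _ d₁ ih =>
  intro h
  by_cases hle : d₂ ≤ (n - 1) * d₁
  · obtain ⟨c, h1, h2⟩ := single_case n hn d₁ d₂ hle
    exact ⟨c, fun _ => 0, by simpa using h1, by simpa using h2⟩
  · push_neg at hle
    have hn2 : 2 ≤ n := by
      by_contra hc
      have hn1 : n = 1 := by omega
      subst hn1
      simp at h hle
      omega
    have hpow : 1 ≤ n ^ 2 := Nat.one_le_pow 2 n (by omega)
    have hn2z : (2 : ℤ) ≤ (n : ℤ) := by exact_mod_cast hn2
    have hzh : (n : ℤ) * d₂ ≤ ((n : ℤ) ^ 2 - 1) * d₁ := by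
      have := h; zify [hpow] at this; exact this
    have hzlt : ((n : ℤ) - 1) * d₁ < d₂ := by
      have := hle; zify [hn] at this; exact this
    have hS1 : (1 : ℤ) ≤ (d₂ : ℤ) - ((n : ℤ) - 1) * d₁ := by linarith
    have hS2 : (n : ℤ) * ((d₂ : ℤ) - ((n : ℤ) - 1) * d₁) ≤ ((n : ℤ) - 1) * d₁ := by
      nlinarith [hzh]
    have hDs : ((d₂ : ℤ) - ((n : ℤ) - 1) * d₁) + 1 ≤ (d₁ : ℤ) := by
      by_contra hcon
      push_neg at hcon
      have hmul : ((n : ℤ) - 1) * d₁ ≤ ((n : ℤ) - 1) * ((d₂ : ℤ) - ((n : ℤ) - 1) * d₁) :=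
        mul_le_mul_of_nonneg_left (by linarith) (by linarith)
      nlinarith
    have P1 : 2 ≤ d₁ := by zify; linarith
    have P2 : d₂ + 1 ≤ n * d₁ := by zify; nlinarith
    have P3 : n * d₂ + n ≤ (n ^ 2 - 1) * d₁ + d₁ := by
      zify [hpow]
      nlinarith [mul_nonneg (by positivity : (0:ℤ) ≤ (n:ℤ))
        (by linarith : (0:ℤ) ≤ (d₁ : ℤ) - ((d₂ : ℤ) - ((n : ℤ) - 1) * d₁) - 1)]
    have P4 : 2 * n ≤ d₂ + 1 := by
      zify
      nlinarith [mul_nonneg (by linarith : (0:ℤ) ≤ (n:ℤ) - 1)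
        (by zify at P1; linarith : (0:ℤ) ≤ (d₁ : ℤ) - 2)]
    obtain ⟨m, h2m, hmn, hmd, hmd2, hG4⟩ :
        ∃ m, 2 ≤ m ∧ m ≤ n ∧ m ≤ d₁ ∧ m * n ≤ d₂ + 1 ∧
          n * d₂ + n ≤ (n ^ 2 - 1) * d₁ + m := by
      rcases le_or_gt (n * d₂ + n) ((n ^ 2 - 1) * d₁ + 2) with hc | hc
      · exact ⟨2, le_refl 2, hn2, P1, P4, hc⟩
      · exact ⟨n * d₂ + n - (n ^ 2 - 1) * d₁, nh1 _ _ _ hc, nh2 _ _ _ h,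
          nh3 _ _ _ _ P3, big_m n d₁ d₂ hn2 hpow P2 hc, nh4 _ _ _ hc⟩
    have hrec := rec_ineq n d₁ d₂ m hn2 hpow h2m hmd hmd2 hG4
    obtain ⟨c, e, h1, h2⟩ := ih (d₁ - m) (by omega) (d₂ - (m * n - 1)) hrec
    have hmfin : m - 2 < n - 1 := by omega
    refine ⟨c, fun i => e i + if i = ⟨m - 2, hmfin⟩ then 1 else 0, ?_, ?_⟩
    · simp only [mul_add, mul_ite, mul_one, mul_zero, Finset.sum_add_distrib,
        Finset.sum_ite_eq', Finset.mem_univ, if_true, Fin.val_mk]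
      omega
    · simp only [mul_add, mul_ite, mul_one, mul_zero, Finset.sum_add_distrib,
        Finset.sum_ite_eq', Finset.mem_univ, if_true, Fin.val_mk]
      rw [show m - 2 + 2 = m from by omega]
      omega
end

section
/- Let k be an algebraically closed field with char k ≠ 2 and n ≥ 1 a natural number. Let m be a natural number with m ≤ n−1 and let d₀ ≥ 1. Then there exist families A : Fin n → Matrix (Fin m) (Fin 1) k and C : Fin n → Matrix (Fin 1) (Fin d₀) k such that ∑_i A i * C i = 0, ⨆_i LinearMap.range (Matrix.mulVecLin (C i)) = ⊤ in (Fin 1 → k), and ⨆_i LinearMap.range (Matrix.mulVecLin (A i)) = ⊤ in (Fin m → k). -/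
set_option maxHeartbeats 1000000

lemma single_mem_range_std {k : Type*} [Field k] {p q : Type*} [Fintype q] [DecidableEq p] [DecidableEq q]
    (a : p) (b : q) :
    Pi.single a (1:k) ∈ LinearMap.range (Matrix.mulVecLin (Matrix.single a b (1:k))) := by
  refine ⟨Pi.single b 1, ?_⟩
  ext r
  simp [Matrix.mulVecLin, Matrix.mulVec, Matrix.single, dotProduct,
    Pi.single_apply, ite_and, eq_comm]

lemma sup_eq_top_of_singles {k : Type*} [Field k] {m : ℕ} {ι : Type*}
    (S : ι → Submodule k (Fin m → k))
    (h : ∀ j : Fin m, ∃ i, Pi.single j (1:k) ∈ S i) :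
    (⨆ i, S i) = ⊤ := by
  rw [eq_top_iff]
  intro x _
  have : x = ∑ j, x j • (Pi.single j 1 : Fin m → k) := by
    ext r; simp [Pi.single_apply]
  rw [this]
  refine Submodule.sum_mem _ fun j _ => Submodule.smul_mem _ _ ?_
  obtain ⟨i, hi⟩ := h j
  exact Submodule.mem_iSup_of_mem i hi

/-- Lemma 4.6 of the paper: for `m ≤ n − 1` and `d₀ ≥ 1` there exists a
representation of `𝒜 = k⟨x₁,…,xₙ⟩/((x₁,…,xₙ)³ + (∑ xᵢ²))` with radical
layering `(d₀, 1, m)`, i.e. a stratum datum of type `(d₀, 1, m)`. -/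
theorem stmt5 (k : Type*) [Field k] [IsAlgClosed k] (hk : ringChar k ≠ 2)
    (n : ℕ) (hn : 1 ≤ n) (m : ℕ) (hm : m ≤ n - 1) (d₀ : ℕ) (hd₀ : 1 ≤ d₀) :
    ∃ (A : Fin n → Matrix (Fin m) (Fin 1) k)
      (C : Fin n → Matrix (Fin 1) (Fin d₀) k),
      (∑ i, A i * C i) = 0 ∧
      (⨆ i, LinearMap.range (Matrix.mulVecLin (C i))) = ⊤ ∧
      (⨆ i, LinearMap.range (Matrix.mulVecLin (A i))) = ⊤ := by
  refine ⟨fun i => if h : (i:ℕ) < m then Matrix.single ⟨i.1, h⟩ 0 1 else 0,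
    fun i => if h : (i:ℕ) < m then 0 else Matrix.single 0 ⟨0, hd₀⟩ 1, ?_, ?_, ?_⟩
  · apply Finset.sum_eq_zero
    intro i _
    by_cases h : (i:ℕ) < m
    · simp [h]
    · simp [h]
  · apply sup_eq_top_of_singles
    intro j
    refine ⟨⟨n - 1, Nat.sub_lt hn one_pos⟩, ?_⟩
    have hj : j = 0 := Subsingleton.elim _ _
    subst hj
    dsimp only
    rw [dif_neg (show ¬ n - 1 < m by omega)]
    apply single_mem_range_std
  · apply sup_eq_top_of_singles
    intro j
    have hjn : (j:ℕ) < n := lt_of_lt_of_le j.2 (le_trans hm (Nat.sub_le n 1))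
    refine ⟨⟨j.1, hjn⟩, ?_⟩
    dsimp only
    rw [dif_pos (show ((⟨j.1, hjn⟩ : Fin n) : ℕ) < m from j.2)]
    apply single_mem_range_std
end

section
/- Let k be a field and n, d₀, d₁, d₂ natural numbers. Let A : Fin n → Matrix (Fin d₂) (Fin d₁) k and C : Fin n → Matrix (Fin d₁) (Fin d₀) k satisfy ∑_i A i * C i = 0 and ⨆_i LinearMap.range (Matrix.mulVecLin (A i)) = ⊤ in (Fin d₂ → k). Then Module.finrank k (⨅_i LinearMap.ker (Matrix.mulVecLin (C i))) + n·d₁ ≥ d₀ + d₂; equivalently, the linear map k^{d₀} → (k^{d₁})ⁿ sending z to (C₁z,…,Cₙz) has rank at most n·d₁ − d₂. -/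
set_option maxHeartbeats 1000000

/-- The lower-bound half of Proposition 5.4 of the paper: if
`∑ᵢ Aᵢ Cᵢ = 0` and the images of the `Aᵢ` together span `k^{d₂}`, then the
common kernel of the `Cᵢ` satisfies
`finrank (⨅ᵢ ker Cᵢ) + n·d₁ ≥ d₀ + d₂`. -/
theorem stmt9 (k : Type*) [Field k] (n d₀ d₁ d₂ : ℕ)
    (A : Fin n → Matrix (Fin d₂) (Fin d₁) k)
    (C : Fin n → Matrix (Fin d₁) (Fin d₀) k)
    (hrel : (∑ i, A i * C i) = 0)
    (hA : (⨆ i, LinearMap.range (Matrix.mulVecLin (A i))) = ⊤) :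
    d₀ + d₂ ≤
      Module.finrank k ↥(⨅ i, LinearMap.ker (Matrix.mulVecLin (C i))) + n * d₁ := by
  classical
  set Φ : (Fin n → Fin d₁ → k) →ₗ[k] (Fin d₂ → k) :=
    ∑ i, (A i).mulVecLin ∘ₗ LinearMap.proj i with hΦ
  set Ψ : (Fin d₀ → k) →ₗ[k] (Fin n → Fin d₁ → k) :=
    LinearMap.pi (fun i => (C i).mulVecLin) with hΨ
  have hΦapp : ∀ v, Φ v = ∑ i, (A i).mulVec (v i) := by
    intro v
    simp [hΦ, LinearMap.sum_apply]
  have hsurj : LinearMap.range Φ = ⊤ := by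
    rw [← top_le_iff, ← hA, iSup_le_iff]
    rintro i x ⟨y, rfl⟩
    exact ⟨Pi.single i y, by
      rw [hΦapp, Fintype.sum_eq_single i]
      · simp
      · intro j hj; simp [Pi.single_eq_of_ne hj]⟩
  have hrange : LinearMap.range Ψ ≤ LinearMap.ker Φ := by
    rintro x ⟨z, rfl⟩
    simp only [LinearMap.mem_ker, hΦapp]
    have h : ∀ i, (A i).mulVec ((C i).mulVec z) = (A i * C i).mulVec z := by
      intro i; rw [Matrix.mulVec_mulVec]
    have hm : Matrix.mulVecLin (∑ i, A i * C i) = ∑ i, Matrix.mulVecLin (A i * C i) :=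
      map_sum (AddMonoidHom.mk' Matrix.mulVecLin (fun a b => Matrix.mulVecLin_add a b)) _ _
    have hm0 : (∑ i, Matrix.mulVecLin (A i * C i)) = (0 : (Fin d₀ → k) →ₗ[k] (Fin d₂ → k)) := by
      rw [← hm, hrel, Matrix.mulVecLin_zero]
    calc ∑ i, (A i).mulVec (Ψ z i) = ∑ i, (Matrix.mulVecLin (A i * C i)) z := by
          simp [hΨ, h]
      _ = 0 := by rw [← LinearMap.sum_apply, hm0, LinearMap.zero_apply]
  have hker : LinearMap.ker Ψ = ⨅ i, LinearMap.ker (Matrix.mulVecLin (C i)) := by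
    rw [hΨ, LinearMap.ker_pi]
  have h1 : Module.finrank k (LinearMap.ker Φ) + d₂ = n * d₁ := by
    have h := LinearMap.finrank_range_add_finrank_ker Φ
    have hd : Module.finrank k (Fin n → Fin d₁ → k) = n * d₁ := by
      rw [Module.finrank_pi_fintype]
      simp [Module.finrank_pi, mul_comm]
    have hd2 : Module.finrank k (Fin d₂ → k) = d₂ := by
      simp [Module.finrank_pi]
    rw [hsurj, finrank_top, hd, hd2] at h
    omega
  have h2 : Module.finrank k (LinearMap.range Ψ) + Module.finrank k (LinearMap.ker Ψ) = d₀ := by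
    have h := LinearMap.finrank_range_add_finrank_ker Ψ
    rwa [Module.finrank_pi, Fintype.card_fin] at h
  have h3 : Module.finrank k (LinearMap.range Ψ) ≤ Module.finrank k (LinearMap.ker Φ) :=
    Submodule.finrank_mono hrange
  rw [← hker]
  omega
end

section
/- Let k be an algebraically closed field with char k ≠ 2 and n ≥ 1 a natural number. Let d₀, d₁, d₂ be natural numbers with d₁ ≤ n·d₀, n·d₂ ≤ (n²−1)·d₁, n·d₂ < d₁, and d₀ + d₂ ≤ n·d₁. For a stratum datum (A,C) of type (d₀,d₁,d₂) and any B : Fin n → Matrix (Fin d₂) (Fin d₀) k, let M i be the square matrix of size d₂+d₁+d₀ with block form [[0, A i, B i],[0, 0, C i],[0, 0, 0]] along the block decomposition d₂, d₁, d₀. Then the minimum, over all such triples (A, B, C), of Module.finrank k (⨅_i LinearMap.ker (Matrix.mulVecLin (M i))) equals d₂ + (d₁ − n·d₂). -/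
/-- Stratum data of type `(d₀, d₁, d₂)` are the representations of
`𝒜 = k⟨x₁,…,xₙ⟩/((x₁,…,xₙ)³ + (∑ xᵢ²))` with radical layering `(d₀,d₁,d₂)`. -/
def IsStratumDatum (k : Type*) [Field k] {n d₀ d₁ d₂ : ℕ}
    (A : Fin n → Matrix (Fin d₂) (Fin d₁) k)
    (C : Fin n → Matrix (Fin d₁) (Fin d₀) k) : Prop :=
  (∑ i, A i * C i) = 0 ∧
  (⨆ i, LinearMap.range (Matrix.mulVecLin (C i))) = ⊤ ∧
  (⨆ i, LinearMap.range (Matrix.mulVecLin (A i))) = ⊤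

/-- The square matrix of size `d₂ + d₁ + d₀` (indexed by
`Fin d₂ ⊕ Fin d₁ ⊕ Fin d₀`) with block form
`[[0, A i, B i], [0, 0, C i], [0, 0, 0]]`. -/
def blockM {k : Type*} [Field k] {n d₀ d₁ d₂ : ℕ}
    (A : Fin n → Matrix (Fin d₂) (Fin d₁) k)
    (B : Fin n → Matrix (Fin d₂) (Fin d₀) k)
    (C : Fin n → Matrix (Fin d₁) (Fin d₀) k) (i : Fin n) :
    Matrix (Fin d₂ ⊕ (Fin d₁ ⊕ Fin d₀)) (Fin d₂ ⊕ (Fin d₁ ⊕ Fin d₀)) k :=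
  Matrix.fromBlocks 0 (Matrix.fromCols (A i) (B i))
    0 (Matrix.fromBlocks 0 (C i) 0 0)

/-!
The socle always contains `k^{d₂} ⊕ (⋂ᵢ ker Aᵢ) ⊕ 0`, and `⋂ᵢ ker Aᵢ` has codimension at most
`n·d₂` in `k^{d₁}`; this is the lower bound. It is an equality as soon as the joint map `(Aᵢ)ᵢ`
is surjective and the `Cᵢ` have no common kernel, whatever `B` is.

To realise this, let `Aᵢ` read off the coordinates `n·t + σ(i)` of `k^{d₁}`, with `σ` a
fixed-point-free rotation of `Fin n` (`n ≥ 2` as soon as `d₂ > 0`), and let `C⁰ᵢ` send the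
`l`-th basis vector of `k^{d₀}` to the `(n·l + i)`-th one. Then `Aᵢ C⁰ᵢ = 0`, and since
`d₁ ≤ n·d₀` the `C⁰ᵢ` together hit every basis vector of `k^{d₁}`. The families `(vᵢ)ᵢ` with
`∑ Aᵢ vᵢ = 0` form a space of dimension at least `n·d₁ - d₂ ≥ d₀`, so the image of `(C⁰ᵢ)ᵢ`
extends to a `d₀`-dimensional subspace of it; parametrising that subspace injectively yields `C`
with trivial common kernel, `∑ Aᵢ Cᵢ = 0`, and ranges still spanning `k^{d₁}`.
-/

open Matrix LinearMap Module

section Extension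
variable {K V : Type*} [DivisionRing K] [AddCommGroup V] [Module K V] [FiniteDimensional K V]

theorem Submodule.exists_le_le_finrank_eq {U₀ W : Submodule K V} (hU₀W : U₀ ≤ W) {d : ℕ}
    (hU₀ : finrank K U₀ ≤ d) (hW : d ≤ finrank K W) :
    ∃ U : Submodule K V, U₀ ≤ U ∧ U ≤ W ∧ finrank K U = d := by
  obtain ⟨m, rfl⟩ := Nat.exists_eq_add_of_le hU₀
  induction m generalizing U₀ with
  | zero => exact ⟨U₀, le_rfl, hU₀W, rfl⟩
  | succ m ih =>
    obtain ⟨v, hvW, hvU₀⟩ := SetLike.exists_of_lt <| hU₀W.lt_of_ne <| by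
      rintro rfl; omega
    have hU₁ := Submodule.finrank_sup_span_singleton hvU₀
    obtain ⟨U, hU₁U, hUW, hU⟩ :=
      ih (sup_le hU₀W ((Submodule.span_singleton_le_iff_mem _ _).2 hvW)) (by omega) (by omega)
    exact ⟨U, le_sup_left.trans hU₁U, hUW, by omega⟩

theorem exists_injective_range_le {d : ℕ} (Ψ : (Fin d → K) →ₗ[K] V) {W : Submodule K V}
    (hΨW : range Ψ ≤ W) (hd : d ≤ finrank K W) :
    ∃ Φ : (Fin d → K) →ₗ[K] V, Function.Injective Φ ∧ range Ψ ≤ range Φ ∧ range Φ ≤ W := by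
  obtain ⟨U, hΨU, hUW, hU⟩ := Submodule.exists_le_le_finrank_eq hΨW
    ((finrank_range_le Ψ).trans (by simp)) hd
  let e : (Fin d → K) ≃ₗ[K] U := LinearEquiv.ofFinrankEq _ _ (by simp [hU])
  refine ⟨U.subtype ∘ₗ e.toLinearMap, U.injective_subtype.comp e.injective, ?_, ?_⟩ <;>
    rwa [range_comp_of_range_eq_top _ e.range, Submodule.range_subtype]

theorem finrank_sub_finrank_le_finrank_ker {V₂ : Type*} [AddCommGroup V₂] [Module K V₂]
    [FiniteDimensional K V₂] (f : V →ₗ[K] V₂) :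
    finrank K V - finrank K V₂ ≤ finrank K (ker f) := by
  have := f.finrank_range_add_finrank_ker
  have := (range f).finrank_le
  omega

theorem finrank_ker_of_surjective {V₂ : Type*} [AddCommGroup V₂] [Module K V₂]
    {f : V →ₗ[K] V₂} (hf : Function.Surjective f) :
    finrank K (ker f) = finrank K V - finrank K V₂ := by
  have := f.finrank_range_add_finrank_ker
  rw [range_eq_top.2 hf, finrank_top] at this
  omega

end Extension

theorem range_eq_top_of_surjective_pi {R M ι : Type*} {φ : ι → Type*} [Semiring R]
    [AddCommMonoid M] [Module R M] [∀ i, AddCommMonoid (φ i)] [∀ i, Module R (φ i)]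
    {f : (i : ι) → M →ₗ[R] φ i} (hf : Function.Surjective (pi f)) (i : ι) : range (f i) = ⊤ :=
  range_eq_top.2 ((Function.surjective_eval i).comp hf)

section Completion
variable {k ι : Type*} [Field k] [Fintype ι] {d₀ d₁ d₂ : ℕ}

theorem mulVecLin_toMatrix' {m n : Type*} [Fintype n] [DecidableEq n] (f : (n → k) →ₗ[k] m → k) :
    (toMatrix' f).mulVecLin = f := by
  rw [← toLin'_apply', toLin'_toMatrix']

theorem exists_iInf_ker_eq_bot_of_sum_mul_eq_zero (A : ι → Matrix (Fin d₂) (Fin d₁) k)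
    (C₀ : ι → Matrix (Fin d₁) (Fin d₀) k) (hAC₀ : ∑ i, A i * C₀ i = 0)
    (hd₀ : d₀ ≤ Fintype.card ι * d₁ - d₂) :
    ∃ C : ι → Matrix (Fin d₁) (Fin d₀) k, ∑ i, A i * C i = 0 ∧
      (∀ i, range (C₀ i).mulVecLin ≤ range (C i).mulVecLin) ∧
      ⨅ i, ker (C i).mulVecLin = ⊥ := by
  let σ : (ι → Fin d₁ → k) →ₗ[k] Fin d₂ → k := ∑ i, (A i).mulVecLin ∘ₗ proj i
  have hσ (Φ : (Fin d₀ → k) →ₗ[k] ι → Fin d₁ → k) :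
      σ ∘ₗ Φ = toLin' (∑ i, A i * toMatrix' (proj i ∘ₗ Φ)) := by
    refine LinearMap.ext fun v => ?_
    simp [σ, map_sum, toLin'_apply', mulVecLin_toMatrix']
  let Ψ := pi fun i => (C₀ i).mulVecLin
  have hΨσ : range Ψ ≤ ker σ := by
    rw [range_le_ker_iff, ← pi_proj_comp Ψ, hσ]
    simp only [Ψ, proj_pi, ← toLin'_apply', toMatrix'_toLin', hAC₀, map_zero]
  obtain ⟨Φ, hΦ, hΨΦ, hΦσ⟩ := exists_injective_range_le Ψ hΨσ
    ((finrank_sub_finrank_le_finrank_ker σ).trans' (by simpa [finrank_pi_fintype] using hd₀))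
  refine ⟨fun i => toMatrix' (proj i ∘ₗ Φ), ?_, fun i => ?_, ?_⟩
  · rw [range_le_ker_iff, hσ] at hΦσ
    exact toLin'.injective (hΦσ.trans (map_zero _).symm)
  · rw [mulVecLin_toMatrix', ← proj_pi (fun i => (C₀ i).mulVecLin) i, range_comp, range_comp]
    exact Submodule.map_mono hΨΦ
  · simpa [mulVecLin_toMatrix', ← ker_pi, ker_eq_bot] using hΦ

end Completion

section Cover
variable {k ι T R L : Type*} [Field k] [Fintype ι] [Fintype R] [Fintype L]
  [DecidableEq ι] [DecidableEq R] [DecidableEq L]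

/-- `Aᵢ` reads the coordinate `sel (i, t)` into its `t`-th one, and `C⁰ᵢ` sends the `l`-th basis
vector to the `ρ`-th one if `pos ρ = (l, i)`, and to `0` if there is no such `ρ`; `hslot` makes
every product `Aᵢ C⁰ᵢ` vanish. -/
theorem exists_surjective_sum_mul_eq_zero_iSup_range_eq_top (pos : R → L × ι)
    (hpos : Function.Injective pos) (sel : ι × T → R) (hsel : Function.Injective sel)
    (hslot : ∀ i t, (pos (sel (i, t))).2 ≠ i) :
    ∃ (A : ι → Matrix T R k) (C₀ : ι → Matrix R L k),
      Function.Surjective (pi fun i => (A i).mulVecLin) ∧ ∑ i, A i * C₀ i = 0 ∧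
      ⨆ i, range (C₀ i).mulVecLin = ⊤ := by
  refine ⟨fun i => of fun t ρ => if ρ = sel (i, t) then 1 else 0,
    fun i => of fun ρ l => if pos ρ = (l, i) then 1 else 0, fun g => ?_, ?_, ?_⟩
  · refine ⟨Function.extend sel (fun p => g p.1 p.2) 0, funext fun i => funext fun t => ?_⟩
    simp [mulVec, dotProduct, hsel.extend_apply]
  · refine Finset.sum_eq_zero fun i _ => ext fun t l => ?_
    simp only [mul_apply, of_apply, ite_mul, one_mul, zero_mul, Finset.sum_ite_eq',
      Finset.mem_univ, if_true]
    simp [Prod.ext_iff, hslot]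
  · refine eq_top_iff.2 <| (Pi.basisFun k R).span_eq.ge.trans <| Submodule.span_le.2 ?_
    rintro _ ⟨ρ, rfl⟩
    refine Submodule.mem_iSup_of_mem (pos ρ).2 ⟨Pi.single (pos ρ).1 1, funext fun ρ' => ?_⟩
    simp [Pi.single_apply, hpos.eq_iff]
end Cover

theorem finRotate_ne_self {n : ℕ} (hn : 2 ≤ n) (i : Fin n) : finRotate n i ≠ i := by
  obtain ⟨m, rfl⟩ := Nat.exists_eq_add_of_le' hn
  simp

theorem exists_injective_pos_sel {n d₀ d₁ d₂ : ℕ} (h₀ : d₁ ≤ n * d₀) (h₂ : n * d₂ ≤ d₁)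
    (hd₂ : d₂ = 0 ∨ 2 ≤ n) :
    ∃ (pos : Fin d₁ → Fin d₀ × Fin n) (sel : Fin n × Fin d₂ → Fin d₁),
      Function.Injective pos ∧ Function.Injective sel ∧ ∀ i t, (pos (sel (i, t))).2 ≠ i := by
  rw [mul_comm] at h₀ h₂
  refine ⟨fun ρ => finProdFinEquiv.symm (Fin.castLE h₀ ρ),
    fun p => Fin.castLE h₂ (finProdFinEquiv (p.2, finRotate n p.1)), ?_, ?_, fun i t => ?_⟩
  · exact finProdFinEquiv.symm.injective.comp (Fin.castLE_injective h₀)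
  · intro p q h
    simpa [Prod.ext_iff, and_comm] using finProdFinEquiv.injective (Fin.castLE_injective h₂ h)
  · have hslot : (finProdFinEquiv.symm (Fin.castLE h₀ (Fin.castLE h₂
        (finProdFinEquiv (t, finRotate n i))))).2 = finRotate n i := by
      ext
      simp [Fin.modNat, Nat.add_mul_mod_self_left, Nat.mod_eq_of_lt]
    rw [hslot]
    exact finRotate_ne_self (hd₂.resolve_left t.pos.ne') i

section Socle
variable {k : Type*} [Field k] {n d₀ d₁ d₂ : ℕ} (A : Fin n → Matrix (Fin d₂) (Fin d₁) k)
  (B : Fin n → Matrix (Fin d₂) (Fin d₀) k) (C : Fin n → Matrix (Fin d₁) (Fin d₀) k)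

def socle : Submodule k (Fin d₂ ⊕ (Fin d₁ ⊕ Fin d₀) → k) :=
  ⨅ i, ker (blockM A B C i).mulVecLin

theorem sumElim_mem_socle_iff (x : Fin d₂ → k) (y : Fin d₁ → k) (z : Fin d₀ → k) :
    Sum.elim x (Sum.elim y z) ∈ socle A B C ↔ ∀ i, A i *ᵥ y + B i *ᵥ z = 0 ∧ C i *ᵥ z = 0 := by
  simp [socle, blockM, fromBlocks_mulVec, ← Sum.elim_zero_zero, Sum.elim_eq_iff]

def socleEmbedding :
    (Fin d₂ → k) × ↥(⨅ i, ker (A i).mulVecLin) →ₗ[k] (Fin d₂ ⊕ (Fin d₁ ⊕ Fin d₀) → k) where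
  toFun p := Sum.elim p.1 (Sum.elim p.2 0)
  map_add' p q := by ext (_ | _ | _) <;> simp
  map_smul' c p := by ext (_ | _ | _) <;> simp

theorem socleEmbedding_injective : Function.Injective (socleEmbedding (d₀ := d₀) A) := by
  rintro ⟨x, y⟩ ⟨x', y'⟩ h
  simp only [socleEmbedding, LinearMap.coe_mk, AddHom.coe_mk, Sum.elim_eq_iff] at h
  simp [h.1, Subtype.ext h.2.1]

theorem finrank_range_socleEmbedding :
    finrank k (range (socleEmbedding (d₀ := d₀) A)) =
      d₂ + finrank k ↥(⨅ i, ker (A i).mulVecLin) := by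
  simp [finrank_range_of_inj (socleEmbedding_injective A)]

theorem range_socleEmbedding_le_socle : range (socleEmbedding A) ≤ socle A B C := by
  rintro _ ⟨⟨x, y, hy⟩, rfl⟩
  simp only [Submodule.mem_iInf, mem_ker, mulVecLin_apply] at hy
  simpa [socleEmbedding, sumElim_mem_socle_iff] using hy

theorem socle_le_range_socleEmbedding (hC : ⨅ i, ker (C i).mulVecLin = ⊥) :
    socle A B C ≤ range (socleEmbedding A) := by
  intro v hv
  obtain ⟨x, y, z, rfl⟩ : ∃ x y z, v = Sum.elim x (Sum.elim y z) :=
    ⟨v ∘ Sum.inl, v ∘ Sum.inr ∘ Sum.inl, v ∘ Sum.inr ∘ Sum.inr, by ext (_ | _ | _) <;> rfl⟩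
  rw [sumElim_mem_socle_iff] at hv
  obtain rfl : z = 0 := by
    rw [← Submodule.mem_bot k, ← hC, Submodule.mem_iInf]
    exact fun i => (hv i).2
  refine ⟨⟨x, y, ?_⟩, rfl⟩
  simpa using fun i => (hv i).1

theorem le_finrank_socle : d₂ + (d₁ - n * d₂) ≤ finrank k (socle A B C) :=
  calc d₂ + (d₁ - n * d₂) ≤ d₂ + finrank k ↥(⨅ i, ker (A i).mulVecLin) := by
        gcongr
        rw [← ker_pi]
        simpa [finrank_pi_fintype] using
          finrank_sub_finrank_le_finrank_ker (pi fun i => (A i).mulVecLin)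
    _ = finrank k (range (socleEmbedding A)) := (finrank_range_socleEmbedding A).symm
    _ ≤ finrank k (socle A B C) := Submodule.finrank_mono (range_socleEmbedding_le_socle A B C)

theorem finrank_socle_of_surjective (hA : Function.Surjective (pi fun i => (A i).mulVecLin))
    (hC : ⨅ i, ker (C i).mulVecLin = ⊥) : finrank k (socle A B C) = d₂ + (d₁ - n * d₂) := by
  rw [le_antisymm (socle_le_range_socleEmbedding A B C hC) (range_socleEmbedding_le_socle A B C),
    finrank_range_socleEmbedding, ← ker_pi, finrank_ker_of_surjective hA]
  simp [finrank_pi_fintype]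

end Socle

theorem stmt12_general (k : Type*) [Field k]
    (n : ℕ) (hn : 1 ≤ n) (d₀ d₁ d₂ : ℕ)
    (h1 : d₁ ≤ n * d₀) (h2 : n * d₂ ≤ (n ^ 2 - 1) * d₁)
    (h3 : n * d₂ < d₁) (h4 : d₀ + d₂ ≤ n * d₁) :
    (∀ (A : Fin n → Matrix (Fin d₂) (Fin d₁) k)
       (B : Fin n → Matrix (Fin d₂) (Fin d₀) k)
       (C : Fin n → Matrix (Fin d₁) (Fin d₀) k), IsStratumDatum k A C →
        d₂ + (d₁ - n * d₂) ≤
          Module.finrank k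
            ↥(⨅ i, LinearMap.ker (Matrix.mulVecLin (blockM A B C i)))) ∧
    (∃ (A : Fin n → Matrix (Fin d₂) (Fin d₁) k)
       (B : Fin n → Matrix (Fin d₂) (Fin d₀) k)
       (C : Fin n → Matrix (Fin d₁) (Fin d₀) k), IsStratumDatum k A C ∧
        Module.finrank k
            ↥(⨅ i, LinearMap.ker (Matrix.mulVecLin (blockM A B C i))) =
          d₂ + (d₁ - n * d₂)) := by
  refine ⟨fun A B C _ => le_finrank_socle A B C, ?_⟩
  have hd₂ : d₂ = 0 ∨ 2 ≤ n := by
    by_cases hn2 : 2 ≤ n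
    · exact Or.inr hn2
    · obtain rfl : n = 1 := by omega
      simpa using h2
  obtain ⟨pos, sel, hpos, hsel, hslot⟩ :=
    exists_injective_pos_sel h1 h3.le hd₂
  obtain ⟨A, C₀, hA, hAC₀, hC₀⟩ :=
    exists_surjective_sum_mul_eq_zero_iSup_range_eq_top (k := k) pos hpos sel hsel hslot
  obtain ⟨C, hAC, hC₀C, hC⟩ :=
    exists_iInf_ker_eq_bot_of_sum_mul_eq_zero A C₀ hAC₀ (by simp; omega)
  refine ⟨A, 0, C, ⟨hAC, eq_top_iff.2 (hC₀.ge.trans (iSup_mono hC₀C)), ?_⟩,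
    finrank_socle_of_surjective A 0 C hA hC⟩
  exact eq_top_iff.2 <| (range_eq_top_of_surjective_pi hA ⟨0, hn⟩).ge.trans
    (le_iSup (fun i => range (A i).mulVecLin) _)

/-- Lemma 5.9 of the paper: under the hypotheses (nonempty stratum,
generic `h₁ = d₁ − n·d₂ > 0`, generic `h₀ = 0`), the generic socle dimension,
i.e. the minimum over all representations `M` with radical layering
`(d₀,d₁,d₂)` of `dim ⨅ᵢ ker Mᵢ`, equals `d₂ + (d₁ − n·d₂)`. -/
theorem stmt12 (k : Type*) [Field k] [IsAlgClosed k] (hk : ringChar k ≠ 2)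
    (n : ℕ) (hn : 1 ≤ n) (d₀ d₁ d₂ : ℕ)
    (h1 : d₁ ≤ n * d₀) (h2 : n * d₂ ≤ (n ^ 2 - 1) * d₁)
    (h3 : n * d₂ < d₁) (h4 : d₀ + d₂ ≤ n * d₁) :
    (∀ (A : Fin n → Matrix (Fin d₂) (Fin d₁) k)
       (B : Fin n → Matrix (Fin d₂) (Fin d₀) k)
       (C : Fin n → Matrix (Fin d₁) (Fin d₀) k), IsStratumDatum k A C →
        d₂ + (d₁ - n * d₂) ≤
          Module.finrank k
            ↥(⨅ i, LinearMap.ker (Matrix.mulVecLin (blockM A B C i)))) ∧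
    (∃ (A : Fin n → Matrix (Fin d₂) (Fin d₁) k)
       (B : Fin n → Matrix (Fin d₂) (Fin d₀) k)
       (C : Fin n → Matrix (Fin d₁) (Fin d₀) k), IsStratumDatum k A C ∧
        Module.finrank k
            ↥(⨅ i, LinearMap.ker (Matrix.mulVecLin (blockM A B C i))) =
          d₂ + (d₁ - n * d₂)) :=
  stmt12_general k n hn d₀ d₁ d₂ h1 h2 h3 h4
end

section
/- Let k be an algebraically closed field with char k ≠ 2 and n ≥ 1 a natural number. Let d₀, d₁, d₂ be natural numbers with d₁ ≤ n·d₀, n·d₂ ≤ (n²−1)·d₁, n·d₂ < d₁, and d₀ + d₂ ≤ n·d₁. Then the minimum, over all stratum data (A,C) of type (d₀,d₁,d₂), of Module.finrank k (⨅_{(i,j) : Fin n × Fin n} LinearMap.ker (Matrix.mulVecLin (A i * C j))) equals d₀ − (n²−1)·d₂ (truncated natural-number subtraction, i.e. max(d₀ − (n²−1)·d₂, 0) over the integers). -/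
/-!
Lower bound: since `∑ᵢ Aᵢ Cᵢ = 0`, the product `A₀ C₀` is determined by the other `n² - 1`
products `Aᵢ Cⱼ`, so the common kernel is cut out by at most `(n² - 1) d₂` linear equations.

Upper bound, by an explicit datum over any field: `Aᵢ` reads off the `i`-th block of `d₂`
coordinates among the first `n d₂` coordinates of `k^{d₁}`, so `Aᵢ Cⱼ` is the `i`-th block of
rows of `Cⱼ`. Number the pairs by `N = i n + j`. Row `a` of `Aᵢ Cⱼ` is `e_{(N-1) d₂ + a}` for
`N ≥ 2`, pair `(0,0)` carries minus the sum of the other diagonal blocks, and the cyclic pairs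
`j = i + 1 mod n` carry in addition `e_a`. So row `a` of pair `(0,1)` is `e_a`, and then row `a`
of pair `N` forces coordinate `(N-1) d₂ + a` of a common kernel vector to vanish. The cyclic
blocks make the first `n d₂` standard vectors of `k^{d₁}` columns of the `Cⱼ`; the remaining rows
of the `Cⱼ` are unit rows supported in the last `d₀ - d₂` columns, which span the rest modulo
those (`n d₂ ≤ d₁ ≤ n d₀` is what makes this fit).
-/

open Matrix Module Finset

theorem iInf_ker_eq_iInf_ker_ne {R M N κ : Type*} [Semiring R] [AddCommMonoid M] [Module R M]
    [AddCommMonoid N] [Module R N] (f : κ → M →ₗ[R] N) (s : Finset κ)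
    (hs : ∑ i ∈ s, f i = 0) {i₀ : κ} (hi₀ : i₀ ∈ s) :
    ⨅ i, LinearMap.ker (f i) = ⨅ i : {i // i ≠ i₀}, LinearMap.ker (f i) := by
  refine le_antisymm (le_iInf fun i => iInf_le _ _) fun z hz => ?_
  simp only [Submodule.mem_iInf, LinearMap.mem_ker] at hz ⊢
  intro i
  by_cases hi : i = i₀
  · subst hi
    have hsum : ∑ j ∈ s, f j z = 0 := by simp [← LinearMap.sum_apply, hs]
    rwa [sum_eq_single_of_mem i hi₀ fun j _ hj => hz ⟨j, hj⟩] at hsum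
  · exact hz ⟨i, hi⟩

section

variable {k : Type*} [Field k] {ι : Type*} [Fintype ι] [DecidableEq ι]

theorem mem_of_forall_single_mem {S : Submodule k (ι → k)} {s : Set ι}
    (hs : ∀ i ∈ s, Pi.single i 1 ∈ S) {v : ι → k} (hv : ∀ i ∉ s, v i = 0) : v ∈ S := by
  rw [← univ_sum_single v]
  refine Submodule.sum_mem _ fun i _ => ?_
  by_cases hi : i ∈ s
  · simpa [← Pi.single_smul'] using S.smul_mem (v i) (hs i hi)
  · simp [hv i hi]

theorem eq_top_of_forall_single_mem {S : Submodule k (ι → k)}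
    (h : ∀ i, Pi.single i 1 ∈ S) : S = ⊤ :=
  eq_top_iff.2 fun _ _ => mem_of_forall_single_mem (s := Set.univ) (fun i _ => h i) (by simp)

theorem eq_top_of_forall_single_mem_of_unitriangular {S : Submodule k (ι → k)} (s : Set ι)
    (hs : ∀ i ∈ s, Pi.single i 1 ∈ S)
    (hsc : ∀ i ∉ s, ∃ v ∈ S, ∀ j ∉ s, v j = (Pi.single i 1 : ι → k) j) : S = ⊤ := by
  refine eq_top_of_forall_single_mem fun i => ?_
  by_cases hi : i ∈ s
  · exact hs i hi
  obtain ⟨v, hvS, hv⟩ := hsc i hi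
  have hdiff : v - Pi.single i 1 ∈ S :=
    mem_of_forall_single_mem hs fun j hj => by simp [hv j hj]
  simpa using S.sub_mem hvS hdiff

theorem finrank_le_card_sub_card_of_forall_eq_zero {K : Submodule k (ι → k)} (s : Finset ι)
    (h : ∀ z ∈ K, ∀ i ∈ s, z i = 0) : finrank k K ≤ Fintype.card ι - #s := by
  let restrict : K →ₗ[k] ({i // i ∉ s} → k) :=
    LinearMap.funLeft k k (Subtype.val : {i // i ∉ s} → ι) ∘ₗ K.subtype
  have hinj : Function.Injective restrict := by
    intro z z' hzz'
    ext i
    by_cases hi : i ∈ s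
    · rw [h z z.2 i hi, h z' z'.2 i hi]
    · exact congrFun hzz' ⟨i, hi⟩
  have := LinearMap.finrank_le_finrank_of_injective hinj
  rwa [finrank_pi, Fintype.card_subtype_compl, Fintype.card_coe] at this

variable {V W : Type*} [AddCommGroup V] [Module k V] [FiniteDimensional k V]
  [AddCommGroup W] [Module k W] [FiniteDimensional k W]

theorem finrank_le_finrank_iInf_ker_add {κ : Type*} [Fintype κ] (f : κ → V →ₗ[k] W) :
    finrank k V ≤ finrank k ↥(⨅ i, LinearMap.ker (f i)) + Fintype.card κ * finrank k W := by
  have hrange : finrank k (LinearMap.range (LinearMap.pi f)) ≤ Fintype.card κ * finrank k W := by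
    simpa [finrank_pi_fintype] using Submodule.finrank_le (LinearMap.range (LinearMap.pi f))
  have := LinearMap.finrank_range_add_finrank_ker (LinearMap.pi f)
  rw [LinearMap.ker_pi] at this
  omega

theorem sub_le_finrank_iInf_ker_mul {n d₀ d₁ d₂ : ℕ} (hn : 0 < n)
    (A : Fin n → Matrix (Fin d₂) (Fin d₁) k) (C : Fin n → Matrix (Fin d₁) (Fin d₀) k)
    (hAC : ∑ i, A i * C i = 0) :
    d₀ - (n ^ 2 - 1) * d₂ ≤
      finrank k ↥(⨅ p : Fin n × Fin n, LinearMap.ker (mulVecLin (A p.1 * C p.2))) := by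
  let f (p : Fin n × Fin n) := mulVecLin (A p.1 * C p.2)
  let i₀ : Fin n := ⟨0, hn⟩
  have hdiag : ∑ p ∈ univ.image fun i => (i, i), f p = 0 := by
    rw [sum_image fun i _ j _ h => (Prod.ext_iff.1 h).1]
    simp only [f, ← Matrix.toLin'_apply', ← map_sum, hAC, map_zero]
  have hcard : Fintype.card {p // p ≠ (i₀, i₀)} = n ^ 2 - 1 := by
    rw [Fintype.card_subtype_compl, Fintype.card_subtype_eq, Fintype.card_prod, Fintype.card_fin,
      sq]
  have := finrank_le_finrank_iInf_ker_add fun p : {p // p ≠ (i₀, i₀)} => f p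
  rw [← iInf_ker_eq_iInf_ker_ne f _ hdiag (mem_image_of_mem _ (mem_univ i₀)), hcard] at this
  simp only [finrank_fin_fun] at this
  change _ ≤ finrank k ↥(⨅ p, LinearMap.ker (f p))
  omega

end

theorem Nat.eq_of_add_one_mod_eq {n i i' : ℕ} (hi : i < n) (hi' : i' < n)
    (h : (i + 1) % n = (i' + 1) % n) : i = i' := by
  have := Nat.ModEq.add_right_cancel' 1 h
  rwa [Nat.ModEq, Nat.mod_eq_of_lt hi, Nat.mod_eq_of_lt hi'] at this

theorem Nat.add_one_mod_ne {n i : ℕ} (hn : 1 < n) (hi : i < n) : (i + 1) % n ≠ i := by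
  rcases (Nat.succ_le_of_lt hi).lt_or_eq with h | h
  · rw [Nat.mod_eq_of_lt h]; omega
  · rw [show i + 1 = n from h, Nat.mod_self]; omega

namespace Stratum

variable (k : Type*) [Field k]

def freeEntry (d₂ N a c : ℕ) : k := if 2 ≤ N ∧ c + d₂ = N * d₂ + a then 1 else 0

def blockEntry (n d₂ i j a c : ℕ) : k :=
  (if j = (i + 1) % n ∧ c = a then 1 else 0) +
    if i = 0 ∧ j = 0 then -∑ l ∈ range n, freeEntry k d₂ (l * n + l) a c
    else freeEntry k d₂ (i * n + j) a c

def bottomEntry (d₀ d₂ j e c : ℕ) : k :=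
  if j = e / (d₀ - d₂) ∧ c = d₂ + e % (d₀ - d₂) then 1 else 0

def A (n d₁ d₂ : ℕ) (i : Fin n) : Matrix (Fin d₂) (Fin d₁) k :=
  of fun a b => if (b : ℕ) = i * d₂ + a then 1 else 0

def C (n d₀ d₁ d₂ : ℕ) (j : Fin n) : Matrix (Fin d₁) (Fin d₀) k :=
  of fun b c => if (b : ℕ) < n * d₂ then blockEntry k n d₂ (b / d₂) j (b % d₂) c
    else bottomEntry k d₀ d₂ j (b - n * d₂) c

variable {k} {n d₀ d₁ d₂ : ℕ}

theorem freeEntry_of_lt {N a c : ℕ} (hc : c < d₂) : freeEntry k d₂ N a c = 0 :=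
  if_neg fun ⟨hN, h⟩ => by nlinarith

theorem freeEntry_div_add_one_mod {c : ℕ} (hd₂ : 0 < d₂) (hc : d₂ ≤ c) (c' : ℕ) :
    freeEntry k d₂ (c / d₂ + 1) (c % d₂) c' = if c' = c then 1 else 0 := by
  have hdiv : 1 ≤ c / d₂ := (Nat.one_le_div_iff hd₂).2 hc
  have hc' := Nat.div_add_mod' c d₂
  refine if_congr ⟨fun ⟨_, h⟩ => by nlinarith, ?_⟩ rfl rfl
  rintro rfl
  constructor <;> nlinarith

theorem blockEntry_of_lt {i j a c : ℕ} (hc : c < d₂) :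
    blockEntry k n d₂ i j a c = if j = (i + 1) % n ∧ c = a then 1 else 0 := by
  simp [blockEntry, freeEntry_of_lt hc]

theorem blockEntry_zero_one (hn : 1 < n) (a c : ℕ) :
    blockEntry k n d₂ 0 1 a c = if c = a then 1 else 0 := by
  simp [blockEntry, freeEntry, Nat.mod_eq_of_lt hn]

theorem blockEntry_of_two_le {i j a c : ℕ} (hN : 2 ≤ i * n + j) :
    blockEntry k n d₂ i j a c =
      (if j = (i + 1) % n ∧ c = a then 1 else 0) + freeEntry k d₂ (i * n + j) a c := by
  have hij : ¬(i = 0 ∧ j = 0) := by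
    rintro ⟨rfl, rfl⟩
    simp at hN
  rw [blockEntry, if_neg hij]

theorem A_mul_C (hd₁ : n * d₂ ≤ d₁) (i j : Fin n) :
    A k n d₁ d₂ i * C k n d₀ d₁ d₂ j =
      of fun (a : Fin d₂) (c : Fin d₀) => blockEntry k n d₂ i j a c := by
  ext a c
  have hb : (i : ℕ) * d₂ + a < n * d₂ := by nlinarith [i.2, a.2]
  rw [mul_apply, sum_eq_single ⟨i * d₂ + a, by omega⟩]
  · have hdiv : ((i : ℕ) * d₂ + a) / d₂ = i := by
      rw [Nat.add_comm, Nat.add_mul_div_right _ _ (Fin.pos a), Nat.div_eq_of_lt a.2, zero_add]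
    simp [A, C, hb, hdiv, Nat.mod_eq_of_lt a.2]
  · intro b _ hb
    simp [A, show (b : ℕ) ≠ i * d₂ + a from fun h => hb (Fin.ext h)]
  · simp

theorem sum_blockEntry_diag (hn : 1 < n) (a c : ℕ) :
    ∑ i ∈ range n, blockEntry k n d₂ i i a c = 0 := by
  obtain ⟨m, rfl⟩ : ∃ m, n = m + 1 := ⟨n - 1, by omega⟩
  have hcyc : ∀ i ∈ range (m + 1), ¬(i = (i + 1) % (m + 1) ∧ c = a) :=
    fun i hi h => Nat.add_one_mod_ne hn (mem_range.1 hi) h.1.symm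
  simp only [blockEntry, sum_add_distrib, sum_ite_of_false hcyc, sum_const_zero, zero_add]
  rw [sum_range_succ', sum_range_succ' (fun l => freeEntry k d₂ (l * (m + 1) + l) a c)]
  simp [freeEntry]

theorem sum_A_mul_C (hn : 1 < n ∨ d₂ = 0) (hd₁ : n * d₂ ≤ d₁) :
    ∑ i, A k n d₁ d₂ i * C k n d₀ d₁ d₂ i = 0 := by
  ext a c
  have hn : 1 < n := hn.resolve_right (Fin.pos a).ne'
  simp only [A_mul_C hd₁, Matrix.sum_apply, of_apply, Matrix.zero_apply]
  rw [Fin.sum_univ_eq_sum_range (fun i => blockEntry k n d₂ i i a c)]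
  exact sum_blockEntry_diag hn a c

theorem eq_zero_of_mem_iInf_ker (hn : 1 < n ∨ d₂ = 0) (hd₁ : n * d₂ ≤ d₁) {z : Fin d₀ → k}
    (hz : z ∈ ⨅ p : Fin n × Fin n,
      LinearMap.ker (mulVecLin (A k n d₁ d₂ p.1 * C k n d₀ d₁ d₂ p.2)))
    (c : Fin d₀) (hc : c < (n ^ 2 - 1) * d₂) : z c = 0 := by
  have hd₂ : 0 < d₂ := Nat.pos_of_ne_zero fun h => by simp [h] at hc
  have hn : 1 < n := hn.resolve_right hd₂.ne'
  have hrow (i j : Fin n) (a : Fin d₂) : ∑ c : Fin d₀, blockEntry k n d₂ i j a c * z c = 0 := by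
    simpa [A_mul_C hd₁, mulVec, dotProduct] using
      congrFun ((Submodule.mem_iInf _).1 hz (i, j)) a
  have hlow (c : Fin d₀) (hc : (c : ℕ) < d₂) : z c = 0 := by
    simpa [blockEntry_zero_one hn, Fin.val_eq_val] using hrow ⟨0, by omega⟩ ⟨1, hn⟩ ⟨c, hc⟩
  by_cases hcd : (c : ℕ) < d₂
  · exact hlow c hcd
  obtain ⟨N, hN⟩ : ∃ N, (c : ℕ) / d₂ + 1 = N := ⟨_, rfl⟩
  have hN2 : 2 ≤ N := by
    have := (Nat.one_le_div_iff hd₂).2 (not_lt.1 hcd)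
    omega
  have hNlt : N < n * n := by
    have : (c : ℕ) / d₂ < n ^ 2 - 1 := (Nat.div_lt_iff_lt_mul hd₂).2 hc
    rw [sq] at this
    omega
  have hij : N / n * n + N % n = N := Nat.div_add_mod' N n
  have hfree (c' : ℕ) : freeEntry k d₂ N (c % d₂) c' = if c' = c then 1 else 0 :=
    hN ▸ freeEntry_div_add_one_mod hd₂ (not_lt.1 hcd) c'
  have hcycle (c' : Fin d₀) :
      (if N % n = (N / n + 1) % n ∧ (c' : ℕ) = c % d₂ then (1 : k) else 0) * z c' = 0 := by
    split_ifs with h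
    · rw [hlow c' (h.2 ▸ Nat.mod_lt _ hd₂), mul_zero]
    · rw [zero_mul]
  calc z c = ∑ c' : Fin d₀, blockEntry k n d₂ (N / n) (N % n) (c % d₂) c' * z c' := by
        simp [blockEntry_of_two_le (hij.symm ▸ hN2 : 2 ≤ N / n * n + N % n), hij, hfree,
          add_mul, hcycle, Fin.val_eq_val]
    _ = 0 := hrow ⟨N / n, Nat.div_lt_of_lt_mul hNlt⟩ ⟨N % n, Nat.mod_lt _ (by omega)⟩
          ⟨c % d₂, Nat.mod_lt _ hd₂⟩

theorem finrank_iInf_ker_le (hn : 1 < n ∨ d₂ = 0) (hd₁ : n * d₂ ≤ d₁) :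
    finrank k ↥(⨅ p : Fin n × Fin n,
      LinearMap.ker (mulVecLin (A k n d₁ d₂ p.1 * C k n d₀ d₁ d₂ p.2))) ≤
        d₀ - (n ^ 2 - 1) * d₂ := by
  refine (finrank_le_card_sub_card_of_forall_eq_zero {c : Fin d₀ | c < (n ^ 2 - 1) * d₂}
    fun z hz c hc => eq_zero_of_mem_iInf_ker hn hd₁ hz c (mem_filter.1 hc).2).trans_eq ?_
  rw [Fin.card_filter_val_lt, Fintype.card_fin]
  omega

theorem single_mem_iSup_range_C_of_lt (hd₁ : n * d₂ ≤ d₁) (hd₀ : d₁ ≤ n * d₀) (b : Fin d₁)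
    (hb : (b : ℕ) < n * d₂) :
    Pi.single b 1 ∈ ⨆ j, LinearMap.range (mulVecLin (C k n d₀ d₁ d₂ j)) := by
  have hd₂ : 0 < d₂ := Nat.pos_of_ne_zero fun h => by simp [h] at hb
  have hn : 0 < n := Nat.pos_of_ne_zero fun h => by simp [h] at hb
  have hd₂₀ : d₂ ≤ d₀ := Nat.le_of_mul_le_mul_left (by omega) hn
  have hi : (b : ℕ) / d₂ < n := Nat.div_lt_of_lt_mul (by rwa [mul_comm])
  let j : Fin n := ⟨((b : ℕ) / d₂ + 1) % n, Nat.mod_lt _ hn⟩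
  let a : Fin d₀ := ⟨(b : ℕ) % d₂, by have := Nat.mod_lt (b : ℕ) hd₂; omega⟩
  refine Submodule.mem_iSup_of_mem j ⟨Pi.single a 1, ?_⟩
  ext b'
  rw [mulVecLin_apply, mulVec_single_one, col_apply, Pi.single_apply]
  by_cases hb' : (b' : ℕ) < n * d₂
  · have hi' : (b' : ℕ) / d₂ < n := Nat.div_lt_of_lt_mul (by rwa [mul_comm])
    simp only [C, of_apply, if_pos hb', blockEntry_of_lt (Nat.mod_lt _ hd₂), j, a]
    refine if_congr ⟨fun ⟨hdiv, hmod⟩ => ?_, fun h => by subst h; simp⟩ rfl rfl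
    rw [← Fin.val_inj, ← Nat.div_add_mod b' d₂, ← Nat.div_add_mod b d₂,
      Nat.eq_of_add_one_mod_eq hi' hi hdiv.symm, hmod]
  · have hne : b' ≠ b := fun h => hb' (h ▸ hb)
    simp only [C, of_apply, if_neg hb', bottomEntry, if_neg hne, a]
    have := Nat.mod_lt (b : ℕ) hd₂
    exact if_neg fun h => by omega

theorem exists_mem_iSup_range_C_of_le (hd₀ : d₁ ≤ n * d₀) (b : Fin d₁)
    (hb : n * d₂ ≤ (b : ℕ)) :
    ∃ v ∈ ⨆ j, LinearMap.range (mulVecLin (C k n d₀ d₁ d₂ j)),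
      ∀ b' : Fin d₁, ¬(b' : ℕ) < n * d₂ → v b' = (Pi.single b 1 : Fin d₁ → k) b' := by
  have he : (b : ℕ) - n * d₂ < (d₀ - d₂) * n := by
    rw [Nat.sub_mul, mul_comm d₀, mul_comm d₂]; omega
  have hm : 0 < d₀ - d₂ := Nat.pos_of_mul_pos_right (by omega : 0 < (d₀ - d₂) * n)
  let j : Fin n := ⟨(b - n * d₂) / (d₀ - d₂), Nat.div_lt_of_lt_mul he⟩
  let c : Fin d₀ := ⟨d₂ + (b - n * d₂) % (d₀ - d₂), by
    have := Nat.mod_lt ((b : ℕ) - n * d₂) hm; omega⟩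
  refine ⟨_, Submodule.mem_iSup_of_mem j ⟨Pi.single c 1, rfl⟩, fun b' hb' => ?_⟩
  rw [mulVecLin_apply, mulVec_single_one, col_apply, Pi.single_apply]
  simp only [C, of_apply, if_neg hb', bottomEntry, j, c]
  refine if_congr ⟨fun ⟨hdiv, hmod⟩ => ?_, fun h => by subst h; simp⟩ rfl rfl
  have h := Nat.div_add_mod ((b' : ℕ) - n * d₂) (d₀ - d₂)
  rw [← hdiv, ← Nat.add_left_cancel hmod, Nat.div_add_mod] at h
  omega

theorem iSup_range_C (hd₁ : n * d₂ ≤ d₁) (hd₀ : d₁ ≤ n * d₀) :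
    ⨆ j, LinearMap.range (mulVecLin (C k n d₀ d₁ d₂ j)) = ⊤ :=
  eq_top_of_forall_single_mem_of_unitriangular {b | (b : ℕ) < n * d₂}
    (single_mem_iSup_range_C_of_lt hd₁ hd₀)
    fun b hb => exists_mem_iSup_range_C_of_le hd₀ b (not_lt.1 hb)

theorem iSup_range_A (hn : 1 < n ∨ d₂ = 0) (hd₁ : n * d₂ ≤ d₁) :
    ⨆ i, LinearMap.range (mulVecLin (A k n d₁ d₂ i)) = ⊤ := by
  refine eq_top_of_forall_single_mem fun a => ?_
  have hn : 0 < n := by have := a.pos; omega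
  have ha : (a : ℕ) < d₁ := by nlinarith [a.2]
  refine Submodule.mem_iSup_of_mem ⟨0, hn⟩ ⟨Pi.single ⟨a, ha⟩ 1, ?_⟩
  ext a'
  simp [A, Pi.single_apply, Fin.ext_iff, eq_comm]

theorem exists_isStratumDatum_finrank_iInf_ker_le (hn : 1 < n ∨ d₂ = 0)
    (hd₁ : n * d₂ ≤ d₁) (hd₀ : d₁ ≤ n * d₀) :
    ∃ (A : Fin n → Matrix (Fin d₂) (Fin d₁) k) (C : Fin n → Matrix (Fin d₁) (Fin d₀) k),
      IsStratumDatum k A C ∧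
        finrank k ↥(⨅ p : Fin n × Fin n, LinearMap.ker (mulVecLin (A p.1 * C p.2))) ≤
          d₀ - (n ^ 2 - 1) * d₂ :=
  ⟨A k n d₁ d₂, C k n d₀ d₁ d₂, ⟨sum_A_mul_C hn hd₁, iSup_range_C hd₁ hd₀, iSup_range_A hn hd₁⟩,
    finrank_iInf_ker_le hn hd₁⟩

end Stratum

theorem stmt13_general (k : Type*) [Field k]
    (n : ℕ) (hn : 1 ≤ n) (d₀ d₁ d₂ : ℕ)
    (h1 : d₁ ≤ n * d₀) (h2 : n * d₂ ≤ (n ^ 2 - 1) * d₁)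
    (h3 : n * d₂ < d₁) :
    (∀ (A : Fin n → Matrix (Fin d₂) (Fin d₁) k)
       (C : Fin n → Matrix (Fin d₁) (Fin d₀) k), IsStratumDatum k A C →
        d₀ - (n ^ 2 - 1) * d₂ ≤
          Module.finrank k
            ↥(⨅ p : Fin n × Fin n,
              LinearMap.ker (Matrix.mulVecLin (A p.1 * C p.2)))) ∧
    (∃ (A : Fin n → Matrix (Fin d₂) (Fin d₁) k)
       (C : Fin n → Matrix (Fin d₁) (Fin d₀) k), IsStratumDatum k A C ∧
        Module.finrank k
            ↥(⨅ p : Fin n × Fin n,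
              LinearMap.ker (Matrix.mulVecLin (A p.1 * C p.2))) =
          d₀ - (n ^ 2 - 1) * d₂) := by
  have lower (A : Fin n → Matrix (Fin d₂) (Fin d₁) k) (C : Fin n → Matrix (Fin d₁) (Fin d₀) k)
      (h : IsStratumDatum k A C) := sub_le_finrank_iInf_ker_mul hn A C h.1
  have hcycle : 1 < n ∨ d₂ = 0 := by
    rcases hn.eq_or_lt with rfl | h
    · simp at h2; omega
    · exact Or.inl h
  obtain ⟨A, C, hAC, hle⟩ :=
    Stratum.exists_isStratumDatum_finrank_iInf_ker_le (k := k) hcycle h3.le h1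
  exact ⟨lower, A, C, hAC, hle.antisymm (lower A C hAC)⟩

/-- Equivalent form of Lemma 5.10 of the paper: under the stated hypotheses,
the minimum over all stratum data `(A, C)` of type `(d₀, d₁, d₂)` of
`dim ⨅_{i,j} ker (Aᵢ · Cⱼ)` equals `d₀ − (n²−1)·d₂` (truncated subtraction);
this is the `B`-independent part of the generic second socle. -/
theorem stmt13 (k : Type*) [Field k] [IsAlgClosed k] (hk : ringChar k ≠ 2)
    (n : ℕ) (hn : 1 ≤ n) (d₀ d₁ d₂ : ℕ)
    (h1 : d₁ ≤ n * d₀) (h2 : n * d₂ ≤ (n ^ 2 - 1) * d₁)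
    (h3 : n * d₂ < d₁) (h4 : d₀ + d₂ ≤ n * d₁) :
    (∀ (A : Fin n → Matrix (Fin d₂) (Fin d₁) k)
       (C : Fin n → Matrix (Fin d₁) (Fin d₀) k), IsStratumDatum k A C →
        d₀ - (n ^ 2 - 1) * d₂ ≤
          Module.finrank k
            ↥(⨅ p : Fin n × Fin n,
              LinearMap.ker (Matrix.mulVecLin (A p.1 * C p.2)))) ∧
    (∃ (A : Fin n → Matrix (Fin d₂) (Fin d₁) k)
       (C : Fin n → Matrix (Fin d₁) (Fin d₀) k), IsStratumDatum k A C ∧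
        Module.finrank k
            ↥(⨅ p : Fin n × Fin n,
              LinearMap.ker (Matrix.mulVecLin (A p.1 * C p.2))) =
          d₀ - (n ^ 2 - 1) * d₂) :=
  stmt13_general k n hn d₀ d₁ d₂ h1 h2 h3
end

section
/- Let k be an algebraically closed field with char k ≠ 2, n ≥ 2 and a ≥ 2 natural numbers, and set d₀ = a, d₁ = n·(a−1), d₂ = (n²−1)·(a−1). For a stratum datum (A,C) of type (d₀,d₁,d₂) and B : Fin n → Matrix (Fin d₂) (Fin d₀) k, let M i be the square matrix of size d₂+d₁+d₀ with block form [[0, A i, B i],[0, 0, C i],[0, 0, 0]]. Then: (1) every stratum datum (A,C) of this type satisfies Module.finrank k (⨅_i LinearMap.ker (Matrix.mulVecLin (C i))) ≥ 1; (2) there exists a triple (A,B,C) with Module.finrank k (⨅_i LinearMap.ker (Matrix.mulVecLin (M i))) = (n²−1)·(a−1) and Module.finrank k (⨅_{i,j} LinearMap.ker (Matrix.mulVecLin (M i * M j))) = (n²−1)·(a−1) + n·(a−1) + 1. -/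
open Matrix LinearMap Module

theorem Sum.elim_eq_zero_iff {α β γ : Type*} [Zero γ] {f : α → γ} {g : β → γ} :
    Sum.elim f g = 0 ↔ f = 0 ∧ g = 0 := by
  simp [funext_iff]

theorem finrank_ker_funLeft_of_injective {k : Type*} [Field k] {α β : Type*} [Fintype α]
    [Fintype β] {f : β → α} (hf : Function.Injective f) :
    finrank k ↥(ker (funLeft k k f)) = Fintype.card α - Fintype.card β := by
  have h := (funLeft k k f).finrank_range_add_finrank_ker
  rw [range_eq_top.2 (funLeft_surjective_of_injective k k f hf), finrank_top,
    finrank_fintype_fun_eq_card, finrank_fintype_fun_eq_card] at h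
  omega

theorem finrank_add_finrank_le_of_sum_comp_eq_zero {k ι V W U : Type*} [Field k] [Fintype ι]
    [AddCommGroup V] [Module k V] [FiniteDimensional k V]
    [AddCommGroup W] [Module k W] [FiniteDimensional k W]
    [AddCommGroup U] [Module k U]
    (f : ι → V →ₗ[k] W) (g : ι → W →ₗ[k] U) (hgf : ∑ i, g i ∘ₗ f i = 0)
    (hg : ⨆ i, range (g i) = ⊤) :
    finrank k U + finrank k V ≤ Fintype.card ι * finrank k W + finrank k ↥(⨅ i, ker (f i)) := by
  classical
  let φ : V →ₗ[k] ι → W := LinearMap.pi f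
  let ψ : (ι → W) →ₗ[k] U := ∑ i, g i ∘ₗ proj i
  have hψφ : ψ ∘ₗ φ = 0 := by
    ext v
    simpa [ψ, φ] using congr($hgf v)
  have hψ : range ψ = ⊤ := by
    refine eq_top_iff.2 (hg ▸ iSup_le fun i => ?_)
    have : ψ ∘ₗ single k (fun _ => W) i = g i := by
      ext w
      simp [ψ, Pi.single_apply, apply_ite]
    exact this ▸ range_comp_le_range _ _
  have hφψ : finrank k ↥(range φ) ≤ finrank k ↥(ker ψ) :=
    Submodule.finrank_mono (range_le_ker_iff.2 hψφ)
  have hrnψ := ψ.finrank_range_add_finrank_ker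
  have hrnφ := φ.finrank_range_add_finrank_ker
  rw [hψ, finrank_top, finrank_pi_fintype, Finset.sum_const] at hrnψ
  rw [ker_pi] at hrnφ
  simp only [Finset.card_univ, smul_eq_mul] at hrnψ
  omega

theorem iSup_range_mulVecLin_eq_top_of_forall_single {R ι α β : Type*} [CommSemiring R]
    [Fintype β] [Finite α] [DecidableEq α] (M : ι → Matrix α β R)
    (h : ∀ x, ∃ i v, M i *ᵥ v = Pi.single x 1) :
    ⨆ i, range (mulVecLin (M i)) = ⊤ := by
  rw [eq_top_iff, ← (Pi.basisFun R α).span_eq, Submodule.span_le]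
  rintro _ ⟨x, rfl⟩
  obtain ⟨i, v, hv⟩ := h x
  exact Submodule.mem_iSup_of_mem i ⟨v, by simpa using hv⟩

theorem Matrix.reindex_mul_reindex {R l m n l' m' n' : Type*} [NonUnitalNonAssocSemiring R]
    [Fintype m] [Fintype m'] (e₂ : l ≃ l') (e₁ : m ≃ m') (e₀ : n ≃ n') (M : Matrix l m R)
    (N : Matrix m n R) :
    reindex e₂ e₁ M * reindex e₁ e₀ N = reindex e₂ e₀ (M * N) := by
  simp only [reindex_apply, submatrix_mul_equiv]

section SocleLowerBound

variable {k : Type*} [Field k]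

theorem card_add_card_le_of_sum_mul_eq_zero {ι α β γ : Type*} [Fintype ι] [Fintype α]
    [Fintype β] [Fintype γ] (A : ι → Matrix γ β k) (C : ι → Matrix β α k)
    (hAC : ∑ i, A i * C i = 0) (hA : ⨆ i, range (mulVecLin (A i)) = ⊤) :
    Fintype.card γ + Fintype.card α ≤
      Fintype.card ι * Fintype.card β + finrank k ↥(⨅ i, ker (mulVecLin (C i))) := by
  classical
  have hgf : ∑ i, mulVecLin (A i) ∘ₗ mulVecLin (C i) = 0 := by
    simp_rw [← mulVecLin_mul, ← toLin'_apply', ← map_sum, hAC, map_zero]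
  simpa using finrank_add_finrank_le_of_sum_comp_eq_zero _ _ hgf hA

theorem one_le_finrank_iInf_ker_of_isStratumDatum {n a : ℕ} (hn : 1 ≤ n) (ha : 1 ≤ a)
    {A : Fin n → Matrix (Fin ((n ^ 2 - 1) * (a - 1))) (Fin (n * (a - 1))) k}
    {C : Fin n → Matrix (Fin (n * (a - 1))) (Fin a) k} (h : IsStratumDatum k A C) :
    1 ≤ finrank k ↥(⨅ i, ker (mulVecLin (C i))) := by
  have key := card_add_card_le_of_sum_mul_eq_zero A C h.1 h.2.2
  simp only [Fintype.card_fin] at key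
  obtain ⟨m, rfl⟩ : ∃ m, a = m + 1 := ⟨a - 1, by omega⟩
  obtain ⟨N, hN⟩ : ∃ N, n ^ 2 = N + 1 := ⟨n ^ 2 - 1, by have := Nat.one_le_pow 2 n hn; omega⟩
  have : n * (n * m) = N * m + m := by rw [← mul_assoc, ← sq, hN]; ring
  simp only [hN, Nat.add_sub_cancel] at key
  omega

end SocleLowerBound

section Reindex

variable {R ι α β α' β' : Type*} [CommSemiring R] [Fintype β] [Fintype β']

theorem Matrix.ker_mulVecLin_reindex (e : α ≃ α') (f : β ≃ β') (M : Matrix α β R) :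
    ker (mulVecLin (reindex e f M)) =
      (ker (mulVecLin M)).comap (LinearEquiv.funCongrLeft R R f).toLinearMap := by
  rw [mulVecLin_reindex, LinearEquiv.ker_comp, ker_comp]

theorem Matrix.range_mulVecLin_reindex (e : α ≃ α') (f : β ≃ β') (M : Matrix α β R) :
    range (mulVecLin (reindex e f M)) =
      (range (mulVecLin M)).map (LinearEquiv.funCongrLeft R R e.symm).toLinearMap := by
  rw [mulVecLin_reindex, range_comp, range_comp_of_range_eq_top _ (LinearEquiv.range _)]

theorem iSup_range_mulVecLin_reindex_eq_top (e : α ≃ α') (f : β ≃ β') {M : ι → Matrix α β R}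
    (hM : ⨆ i, range (mulVecLin (M i)) = ⊤) :
    ⨆ i, range (mulVecLin (reindex e f (M i))) = ⊤ := by
  simp_rw [Matrix.range_mulVecLin_reindex, ← Submodule.map_iSup, hM, Submodule.map_top,
    LinearEquiv.range]

variable {k : Type*} [Field k]

theorem finrank_iInf_ker_mulVecLin_reindex (e : α ≃ α') (f : β ≃ β') (M : ι → Matrix α β k) :
    finrank k ↥(⨅ i, ker (mulVecLin (reindex e f (M i)))) =
      finrank k ↥(⨅ i, ker (mulVecLin (M i))) := by
  rw [iInf_congr fun i => Matrix.ker_mulVecLin_reindex e f (M i), ← Submodule.comap_iInf,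
    Submodule.comap_equiv_eq_map_symm, LinearEquiv.finrank_map_eq]

theorem finrank_iInf_ker_mulVecLin_reindex_mul [Fintype α] [Fintype α'] (e : α ≃ α')
    (M : ι → Matrix α α k) :
    finrank k ↥(⨅ p : ι × ι, ker (mulVecLin (reindex e e (M p.1) * reindex e e (M p.2)))) =
      finrank k ↥(⨅ p : ι × ι, ker (mulVecLin (M p.1 * M p.2))) := by
  rw [iInf_congr fun p : ι × ι =>
    congrArg (fun M => ker (mulVecLin M)) (reindex_mul_reindex e e e (M p.1) (M p.2))]
  exact finrank_iInf_ker_mulVecLin_reindex e e fun p : ι × ι => (M p.1 * M p.2 : Matrix α α k)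

end Reindex

section BlockMatrix

variable {R : Type*} {ι₂ ι₁ ι₀ : Type*}

def blockMatrix [Zero R] (A : Matrix ι₂ ι₁ R) (B : Matrix ι₂ ι₀ R) (C : Matrix ι₁ ι₀ R) :
    Matrix (ι₂ ⊕ (ι₁ ⊕ ι₀)) (ι₂ ⊕ (ι₁ ⊕ ι₀)) R :=
  fromBlocks 0 (fromCols A B) 0 (fromBlocks 0 C 0 0)

theorem blockMatrix_reindex [Zero R] {ι₂' ι₁' ι₀' : Type*} (e₂ : ι₂ ≃ ι₂') (e₁ : ι₁ ≃ ι₁')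
    (e₀ : ι₀ ≃ ι₀') (A : Matrix ι₂ ι₁ R) (B : Matrix ι₂ ι₀ R) (C : Matrix ι₁ ι₀ R) :
    blockMatrix (reindex e₂ e₁ A) (reindex e₂ e₀ B) (reindex e₁ e₀ C) =
      reindex (e₂.sumCongr (e₁.sumCongr e₀)) (e₂.sumCongr (e₁.sumCongr e₀))
        (blockMatrix A B C) := by
  ext (x | x | x) (y | y | y) <;> rfl

theorem blockM_reindex {k : Type*} [Field k] {n d₀ d₁ d₂ : ℕ} (e₂ : ι₂ ≃ Fin d₂)
    (e₁ : ι₁ ≃ Fin d₁) (e₀ : ι₀ ≃ Fin d₀) (A : Fin n → Matrix ι₂ ι₁ k)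
    (B : Fin n → Matrix ι₂ ι₀ k) (C : Fin n → Matrix ι₁ ι₀ k) :
    blockM (fun i => reindex e₂ e₁ (A i)) (fun i => reindex e₂ e₀ (B i))
      (fun i => reindex e₁ e₀ (C i)) =
      fun i => reindex (e₂.sumCongr (e₁.sumCongr e₀)) (e₂.sumCongr (e₁.sumCongr e₀))
        (blockMatrix (A i) (B i) (C i)) :=
  funext fun i => blockMatrix_reindex e₂ e₁ e₀ (A i) (B i) (C i)

variable [Semiring R] [Fintype ι₂] [Fintype ι₁] [Fintype ι₀]

theorem blockMatrix_mulVec (A : Matrix ι₂ ι₁ R) (B : Matrix ι₂ ι₀ R) (C : Matrix ι₁ ι₀ R)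
    (v : ι₂ ⊕ (ι₁ ⊕ ι₀) → R) :
    blockMatrix A B C *ᵥ v =
      (A *ᵥ (v ∘ Sum.inr ∘ Sum.inl) + B *ᵥ (v ∘ Sum.inr ∘ Sum.inr)) ⊕ᵥ
        ((C *ᵥ (v ∘ Sum.inr ∘ Sum.inr)) ⊕ᵥ 0) := by
  have hv : v ∘ Sum.inr = (v ∘ Sum.inr ∘ Sum.inl) ⊕ᵥ (v ∘ Sum.inr ∘ Sum.inr) := by
    ext (x | x) <;> rfl
  simp [blockMatrix, fromBlocks_mulVec, hv]

theorem blockMatrix_mul_blockMatrix_mulVec (A A' : Matrix ι₂ ι₁ R) (B B' : Matrix ι₂ ι₀ R)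
    (C C' : Matrix ι₁ ι₀ R) (v : ι₂ ⊕ (ι₁ ⊕ ι₀) → R) :
    (blockMatrix A B C * blockMatrix A' B' C') *ᵥ v =
      (A *ᵥ C' *ᵥ (v ∘ Sum.inr ∘ Sum.inr)) ⊕ᵥ 0 := by
  rw [← mulVec_mulVec, blockMatrix_mulVec, blockMatrix_mulVec]
  simp only [← Function.comp_assoc, Sum.elim_comp_inl, Sum.elim_comp_inr, Sum.elim_zero_zero,
    mulVec_zero, add_zero]

end BlockMatrix

theorem isStratumDatum_reindex {k : Type*} [Field k] {n d₀ d₁ d₂ : ℕ} {ι₂ ι₁ ι₀ : Type*}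
    [Fintype ι₁] [Fintype ι₀] (e₂ : ι₂ ≃ Fin d₂) (e₁ : ι₁ ≃ Fin d₁) (e₀ : ι₀ ≃ Fin d₀)
    {A : Fin n → Matrix ι₂ ι₁ k} {C : Fin n → Matrix ι₁ ι₀ k}
    (hAC : ∑ i, A i * C i = 0) (hC : ⨆ i, range (mulVecLin (C i)) = ⊤)
    (hA : ⨆ i, range (mulVecLin (A i)) = ⊤) :
    IsStratumDatum k (fun i => reindex e₂ e₁ (A i)) (fun i => reindex e₁ e₀ (C i)) := by
  refine ⟨?_, iSup_range_mulVecLin_reindex_eq_top e₁ e₀ hC,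
    iSup_range_mulVecLin_reindex_eq_top e₂ e₁ hA⟩
  simp_rw [reindex_mul_reindex, ← coe_reindexLinearEquiv k k, ← map_sum, hAC, map_zero]

section Witness

variable {R : Type*} [CommRing R] {ι τ : Type*} [DecidableEq ι] [DecidableEq τ] {o l : ι}

abbrev QuadMonomial (o : ι) : Type _ := {p : ι × ι // p ≠ (o, o)}

/-- The coordinates of `xᵢxⱼ` in the basis `QuadMonomial o` of the degree-two part of `𝒜`,
using `x_o² = -∑_{i ≠ o} xᵢ²`. -/
def quadCoord (o i j : ι) (q : QuadMonomial o) : R :=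
  if (i, j) = (o, o) then (if q.1.1 = q.1.2 then -1 else 0) else if q.1 = (i, j) then 1 else 0

theorem quadCoord_of_ne {i j : ι} (h : (i, j) ≠ (o, o)) (q : QuadMonomial o) :
    quadCoord o i j q = (if q.1 = (i, j) then 1 else 0 : R) :=
  if_neg h

theorem quadCoord_self (q : QuadMonomial o) :
    quadCoord o o o q = (if q.1.1 = q.1.2 then -1 else 0 : R) :=
  if_pos rfl

/- `V₀ = R^{Option τ}`, where `none` indexes the extra generator, `V₁ = R^{ι × τ}` and
`V₂ = R^{QuadMonomial o × τ}`. -/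

variable (o) in
def witnessA (i : ι) : Matrix (QuadMonomial o × τ) (ι × τ) R :=
  of fun p y => if p.2 = y.2 then quadCoord o i y.1 p.1 else 0

def witnessB (o l : ι) (t₀ : τ) (i : ι) : Matrix (QuadMonomial o × τ) (Option τ) R :=
  of fun p w => if i = l ∧ p.1.1 = (l, l) ∧ p.2 = t₀ ∧ w = none then 1 else 0

def witnessC (i : ι) : Matrix (ι × τ) (Option τ) R :=
  of fun y w => if y.1 = i ∧ w = some y.2 then 1 else 0

def witness (o l : ι) (t₀ : τ) (i : ι) :
    Matrix (QuadMonomial o × τ ⊕ (ι × τ ⊕ Option τ)) (QuadMonomial o × τ ⊕ (ι × τ ⊕ Option τ)) R :=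
  blockMatrix (witnessA o i) (witnessB o l t₀ i) (witnessC i)

theorem witnessB_eq_zero_of_ne (t₀ : τ) {i : ι} (hi : i ≠ l) :
    witnessB o l t₀ i = (0 : Matrix _ _ R) := by
  ext p w
  simp [witnessB, hi]

variable [Fintype τ]

theorem witnessB_mulVec_apply (t₀ : τ) (i : ι) (z : Option τ → R) (q : QuadMonomial o) (t : τ) :
    (witnessB o l t₀ i *ᵥ z) (q, t) = if i = l ∧ q.1 = (l, l) ∧ t = t₀ then z none else 0 := by
  simp [witnessB, mulVec, dotProduct, ite_and]

theorem witnessC_mulVec_apply (i : ι) (z : Option τ → R) (j : ι) (t : τ) :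
    (witnessC i *ᵥ z) (j, t) = if j = i then z (some t) else 0 := by
  simp [witnessC, mulVec, dotProduct, ite_and]

variable [Fintype ι]

theorem sum_quadCoord_diag (q : QuadMonomial o) : ∑ i, (quadCoord o i i q : R) = 0 := by
  rw [Fintype.sum_eq_add_sum_compl o, quadCoord_self,
    Finset.sum_congr rfl fun i hi => quadCoord_of_ne (by simpa using hi) q]
  obtain ⟨⟨a, b⟩, hq⟩ := q
  by_cases hab : a = b
  · subst hab
    have ha : a ≠ o := by simpa using hq
    simp [ha]
  · simp only [hab, if_false, zero_add]
    exact Finset.sum_eq_zero fun i _ => if_neg fun h => hab (by simp_all)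

theorem witnessA_mulVec_apply (i : ι) (y : ι × τ → R) (q : QuadMonomial o) (t : τ) :
    (witnessA o i *ᵥ y) (q, t) = ∑ j, quadCoord o i j q * y (j, t) := by
  simp [witnessA, mulVec, dotProduct, Fintype.sum_prod_type, ite_mul, Finset.sum_ite_eq]

theorem witnessA_mulVec_apply_mk {i j : ι} (h : (i, j) ≠ (o, o)) (y : ι × τ → R) (t : τ) :
    (witnessA o i *ᵥ y) (⟨(i, j), h⟩, t) = y (j, t) := by
  rw [witnessA_mulVec_apply, Finset.sum_eq_single j]
  · rw [quadCoord_of_ne h, if_pos rfl, one_mul]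
  · intro j' _ hj'
    simp only [quadCoord]
    split_ifs <;> simp_all
  · simp

theorem witnessA_self_mulVec_apply_diag (hl : l ≠ o) (y : ι × τ → R) (t : τ) :
    (witnessA o o *ᵥ y) (⟨(l, l), by simp [hl]⟩, t) = -y (o, t) := by
  rw [witnessA_mulVec_apply, Finset.sum_eq_single o]
  · simp [quadCoord_self]
  · intro j' _ hj'
    simp only [quadCoord]
    split_ifs <;> simp_all
  · simp

theorem eq_zero_of_witnessA_self_mulVec_eq_zero (hl : l ≠ o) {y : ι × τ → R}
    (hy : witnessA o o *ᵥ y = 0) : y = 0 := by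
  ext ⟨j, t⟩
  by_cases hj : j = o
  · subst hj
    simpa using (witnessA_self_mulVec_apply_diag hl y t).symm.trans (congr_fun hy _)
  · simpa using (witnessA_mulVec_apply_mk (by simp [hj]) y t).symm.trans (congr_fun hy _)

theorem sum_witnessA_mul_witnessC :
    (∑ i, witnessA o i * witnessC i : Matrix (QuadMonomial o × τ) (Option τ) R) = 0 := by
  refine ext_of_mulVec_single fun w => ?_
  ext ⟨q, t⟩
  rw [zero_mulVec, sum_mulVec, Finset.sum_apply]
  have hassoc (i : ι) : (witnessA o i * witnessC i) *ᵥ Pi.single w (1 : R) =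
      witnessA o i *ᵥ witnessC i *ᵥ Pi.single w 1 := (mulVec_mulVec _ _ _).symm
  simp_rw [hassoc, witnessA_mulVec_apply, witnessC_mulVec_apply, mul_ite, mul_zero,
    Finset.sum_ite_eq', Finset.mem_univ, if_true, ← Finset.sum_mul, sum_quadCoord_diag, zero_mul,
    Pi.zero_apply]

theorem iSup_range_witnessC :
    ⨆ i : ι, range (mulVecLin (witnessC (R := R) (τ := τ) i)) = ⊤ := by
  refine iSup_range_mulVecLin_eq_top_of_forall_single _ fun ⟨j, t⟩ =>
    ⟨j, Pi.single (some t) 1, ?_⟩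
  ext ⟨j', t'⟩
  rw [witnessC_mulVec_apply]
  by_cases hj : j' = j <;> by_cases ht : t' = t <;> simp [hj, ht]

theorem iSup_range_witnessA :
    ⨆ i, range (mulVecLin (witnessA (R := R) (τ := τ) o i)) = ⊤ := by
  refine iSup_range_mulVecLin_eq_top_of_forall_single _
    fun ⟨⟨(i, j), h⟩, t⟩ => ⟨i, Pi.single (j, t) 1, ?_⟩
  ext ⟨q, t'⟩
  rw [mulVec_single_one]
  simp only [col_apply, witnessA, of_apply, quadCoord_of_ne h, Pi.single_apply, Prod.ext_iff,
    Subtype.ext_iff]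
  by_cases hq : q.1 = (i, j) <;> by_cases ht : t' = t <;> simp_all [Prod.ext_iff]

theorem eq_zero_of_forall_witness (hl : l ≠ o) (t₀ : τ) {y : ι × τ → R} {z : Option τ → R}
    (h : ∀ i, witnessA o i *ᵥ y + witnessB o l t₀ i *ᵥ z = 0 ∧ witnessC i *ᵥ z = 0) :
    y = 0 ∧ z = 0 := by
  have hy : y = 0 := by
    refine eq_zero_of_witnessA_self_mulVec_eq_zero hl ?_
    simpa [witnessB_eq_zero_of_ne t₀ hl.symm] using (h o).1
  refine ⟨hy, funext fun w => ?_⟩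
  cases w with
  | none =>
    simpa [hy, witnessB_mulVec_apply] using congr_fun (h l).1 (⟨(l, l), by simp [hl]⟩, t₀)
  | some t => simpa [witnessC_mulVec_apply] using congr_fun (h o).2 (o, t)

theorem iInf_ker_witness (hl : l ≠ o) (t₀ : τ) :
    ⨅ i, ker (mulVecLin (witness (R := R) o l t₀ i)) = ker (funLeft R R Sum.inr) := by
  ext v
  have hv : v ∘ Sum.inr = (v ∘ Sum.inr ∘ Sum.inl) ⊕ᵥ (v ∘ Sum.inr ∘ Sum.inr) := by
    ext (x | x) <;> rfl
  simp only [Submodule.mem_iInf, mem_ker, mulVecLin_apply, witness, blockMatrix_mulVec,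
    Sum.elim_eq_zero_iff, and_true]
  change _ ↔ v ∘ Sum.inr = 0
  rw [hv, Sum.elim_eq_zero_iff]
  refine ⟨eq_zero_of_forall_witness hl t₀, fun ⟨hy, hz⟩ i => ?_⟩
  simp [hy, hz]

theorem iInf_ker_witness_mul_witness (hl : l ≠ o) (t₀ : τ) :
    ⨅ p : ι × ι, ker (mulVecLin (witness (R := R) o l t₀ p.1 * witness o l t₀ p.2)) =
      ker (funLeft R R (Sum.inr ∘ Sum.inr ∘ some)) := by
  ext v
  simp only [Submodule.mem_iInf, mem_ker, mulVecLin_apply, witness,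
    blockMatrix_mul_blockMatrix_mulVec, Sum.elim_eq_zero_iff, and_true, Prod.forall]
  change _ ↔ v ∘ Sum.inr ∘ Sum.inr ∘ some = 0
  constructor
  · intro h
    ext t
    have hll := congr_fun (h l l) (⟨(l, l), by simp [hl]⟩, t)
    rwa [witnessA_mulVec_apply_mk, witnessC_mulVec_apply, if_pos rfl] at hll
  · intro h i j
    have : witnessC j *ᵥ (v ∘ Sum.inr ∘ Sum.inr) = 0 := by
      ext ⟨j', t⟩
      simpa [witnessC_mulVec_apply] using fun _ => congr_fun h t
    rw [this, mulVec_zero]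

end Witness

section WitnessFinrank

variable {k : Type*} [Field k] {ι τ : Type*} [Fintype ι] [DecidableEq ι] [Fintype τ]
  [DecidableEq τ] {o l : ι}

theorem finrank_iInf_ker_witness (hl : l ≠ o) (t₀ : τ) :
    finrank k ↥(⨅ i, ker (mulVecLin (witness (R := k) o l t₀ i))) =
      Fintype.card (QuadMonomial o × τ) := by
  rw [iInf_ker_witness hl, finrank_ker_funLeft_of_injective Sum.inr_injective, Fintype.card_sum]
  omega

theorem finrank_iInf_ker_witness_mul_witness (hl : l ≠ o) (t₀ : τ) :
    finrank k ↥(⨅ p : ι × ι, ker (mulVecLin (witness (R := k) o l t₀ p.1 * witness o l t₀ p.2))) =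
      Fintype.card (QuadMonomial o × τ) + Fintype.card (ι × τ) + 1 := by
  rw [iInf_ker_witness_mul_witness hl, finrank_ker_funLeft_of_injective
      (Sum.inr_injective.comp (Sum.inr_injective.comp (Option.some_injective τ))),
    Fintype.card_sum, Fintype.card_sum, Fintype.card_option]
  omega

end WitnessFinrank

theorem exists_isStratumDatum_finrank_socle (k : Type*) [Field k] {n a : ℕ} (hn : 2 ≤ n)
    (ha : 2 ≤ a) :
    ∃ (A : Fin n → Matrix (Fin ((n ^ 2 - 1) * (a - 1))) (Fin (n * (a - 1))) k)
      (B : Fin n → Matrix (Fin ((n ^ 2 - 1) * (a - 1))) (Fin a) k)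
      (C : Fin n → Matrix (Fin (n * (a - 1))) (Fin a) k), IsStratumDatum k A C ∧
      finrank k ↥(⨅ i, ker (mulVecLin (blockM A B C i))) = (n ^ 2 - 1) * (a - 1) ∧
      finrank k ↥(⨅ p : Fin n × Fin n, ker (mulVecLin (blockM A B C p.1 * blockM A B C p.2))) =
        (n ^ 2 - 1) * (a - 1) + n * (a - 1) + 1 := by
  let o : Fin n := ⟨0, by omega⟩
  let l : Fin n := ⟨1, by omega⟩
  have hl : l ≠ o := by simp [l, o, Fin.ext_iff]
  let t₀ : Fin (a - 1) := ⟨0, by omega⟩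
  have hQ : Fintype.card (QuadMonomial o × Fin (a - 1)) = (n ^ 2 - 1) * (a - 1) := by
    simp [sq]
  let e₂ : QuadMonomial o × Fin (a - 1) ≃ Fin ((n ^ 2 - 1) * (a - 1)) :=
    Fintype.equivFinOfCardEq hQ
  let e₀ : Option (Fin (a - 1)) ≃ Fin a := Fintype.equivFinOfCardEq (by simp; omega)
  refine ⟨fun i => reindex e₂ finProdFinEquiv (witnessA o i),
    fun i => reindex e₂ e₀ (witnessB o l t₀ i), fun i => reindex finProdFinEquiv e₀ (witnessC i),
    isStratumDatum_reindex _ _ _ sum_witnessA_mul_witnessC iSup_range_witnessC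
      iSup_range_witnessA, ?_, ?_⟩
  · rw [blockM_reindex]
    exact (finrank_iInf_ker_mulVecLin_reindex _ _ (witness o l t₀)).trans
      ((finrank_iInf_ker_witness hl t₀).trans hQ)
  · rw [blockM_reindex]
    refine (finrank_iInf_ker_mulVecLin_reindex_mul _ (witness o l t₀)).trans ?_
    rw [finrank_iInf_ker_witness_mul_witness hl t₀, hQ]
    simp

theorem stmt16_general (k : Type*) [Field k]
    (n : ℕ) (hn : 2 ≤ n) (a : ℕ) (ha : 2 ≤ a)
    (d₀ d₁ d₂ : ℕ) (hd₀ : d₀ = a) (hd₁ : d₁ = n * (a - 1))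
    (hd₂ : d₂ = (n ^ 2 - 1) * (a - 1)) :
    (∀ (A : Fin n → Matrix (Fin d₂) (Fin d₁) k)
       (C : Fin n → Matrix (Fin d₁) (Fin d₀) k), IsStratumDatum k A C →
        1 ≤ Module.finrank k
            ↥(⨅ i, LinearMap.ker (Matrix.mulVecLin (C i)))) ∧
    (∃ (A : Fin n → Matrix (Fin d₂) (Fin d₁) k)
       (B : Fin n → Matrix (Fin d₂) (Fin d₀) k)
       (C : Fin n → Matrix (Fin d₁) (Fin d₀) k), IsStratumDatum k A C ∧
        Module.finrank k
            ↥(⨅ i, LinearMap.ker (Matrix.mulVecLin (blockM A B C i))) =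
          (n ^ 2 - 1) * (a - 1) ∧
        Module.finrank k
            ↥(⨅ p : Fin n × Fin n,
              LinearMap.ker
                (Matrix.mulVecLin (blockM A B C p.1 * blockM A B C p.2))) =
          (n ^ 2 - 1) * (a - 1) + n * (a - 1) + 1) := by
  subst hd₀ hd₁ hd₂
  exact ⟨fun A C h => one_le_finrank_iInf_ker_of_isStratumDatum (by omega) (by omega) h,
    exists_isStratumDatum_finrank_socle k hn ha⟩

/-- The first exceptional case of Theorem 1.2 of the paper: for the radical
layering `(a, n(a−1), (n²−1)(a−1))`, every stratum datum has `h₀ ≥ 1`, and the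
generic socle layering is `((n²−1)(a−1), n(a−1)+1, a−1)`, witnessed by a
representation whose socle has dimension `(n²−1)(a−1)` and whose second socle
has dimension `(n²−1)(a−1) + n(a−1) + 1`. -/
theorem stmt16 (k : Type*) [Field k] [IsAlgClosed k] (hk : ringChar k ≠ 2)
    (n : ℕ) (hn : 2 ≤ n) (a : ℕ) (ha : 2 ≤ a)
    (d₀ d₁ d₂ : ℕ) (hd₀ : d₀ = a) (hd₁ : d₁ = n * (a - 1))
    (hd₂ : d₂ = (n ^ 2 - 1) * (a - 1)) :
    (∀ (A : Fin n → Matrix (Fin d₂) (Fin d₁) k)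
       (C : Fin n → Matrix (Fin d₁) (Fin d₀) k), IsStratumDatum k A C →
        1 ≤ Module.finrank k
            ↥(⨅ i, LinearMap.ker (Matrix.mulVecLin (C i)))) ∧
    (∃ (A : Fin n → Matrix (Fin d₂) (Fin d₁) k)
       (B : Fin n → Matrix (Fin d₂) (Fin d₀) k)
       (C : Fin n → Matrix (Fin d₁) (Fin d₀) k), IsStratumDatum k A C ∧
        Module.finrank k
            ↥(⨅ i, LinearMap.ker (Matrix.mulVecLin (blockM A B C i))) =
          (n ^ 2 - 1) * (a - 1) ∧
        Module.finrank k
            ↥(⨅ p : Fin n × Fin n,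
              LinearMap.ker
                (Matrix.mulVecLin (blockM A B C p.1 * blockM A B C p.2))) =
          (n ^ 2 - 1) * (a - 1) + n * (a - 1) + 1) :=
  stmt16_general k n hn a ha d₀ d₁ d₂ hd₀ hd₁ hd₂
end
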